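/- arXiv:hep-th/9406036 — 10 statements merged into one kernel-verified Lean document; each statement's English description precedes it below -/
import Mathlib

section
/- Let (V, ω) be a finite-dimensional real symplectic vector space and let Z ⊆ V be a symplectic subspace. Equip V × V with the bilinear form Ω((v₁,v₂),(w₁,w₂)) = ω(v₁,w₁) − ω(v₂,w₂), and let Δ_Z = {(z,z) : z ∈ Z} be the diagonal copy of Z. Then the Ω-orthogonal complement of Δ_Z in V × V equals {(v,w) ∈ V × V : v − w ∈ Z^⊥}, and this space is the internal direct sum Δ_Z ⊕ (Z^⊥ × Z^⊥); in particular the quotient (Δ_Z)^⊥ / Δ_Z is linearly isomorphic to Z^⊥ × Z^⊥. -/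
/-!
Pairing the diagonal element `(z, z)` with `(v, w)` under `Ω` gives `ω(z, v - w)`, so
`(Δ_Z)^⊥` is the preimage of `Z^⊥` under `(v, w) ↦ v - w`. Since `Z ∩ Z^⊥ = 0` and
`dim Z + dim Z^⊥ ≥ dim V` for any bilinear form, `V = Z ⊕ Z^⊥`; writing `w = z + b` with
`z ∈ Z`, `b ∈ Z^⊥` splits `(v, w) = (z, z) + (v - z, b)`, and the second summand lies in
`Z^⊥ × Z^⊥` when `v - w ∈ Z^⊥`. The diagonal meets `Z^⊥ × Z^⊥` trivially, so the quotient by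
`Δ_Z` is the other summand.
-/

namespace Submodule

variable {R M N : Type*} [Ring R] [AddCommGroup M] [AddCommGroup N] [Module R M] [Module R N]

def prodEquivProd (p : Submodule R M) (q : Submodule R N) : ↥(p.prod q) ≃ₗ[R] ↥p × ↥q where
  toFun x := (⟨x.1.1, x.2.1⟩, ⟨x.1.2, x.2.2⟩)
  invFun x := ⟨(x.1.1, x.2.1), ⟨x.1.2, x.2.2⟩⟩
  map_add' _ _ := rfl
  map_smul' _ _ := rfl
  left_inv _ := rfl
  right_inv _ := rfl

noncomputable def supQuotientEquivOfDisjoint {p q : Submodule R M} (h : Disjoint p q) :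
    (↥(p ⊔ q) ⧸ q.comap (p ⊔ q).subtype) ≃ₗ[R] p :=
  (LinearMap.quotientInfEquivSupQuotient p q).symm.trans <|
    quotEquivOfEqBot _ <| by
      rw [comap_subtype_self, top_inf_eq, ← disjoint_iff_comap_eq_bot]
      exact h

theorem diagonal_sup_prod_eq_comap_sub {Z W : Submodule R M} (h : Codisjoint Z W) :
    Z.map (LinearMap.id.prod LinearMap.id) ⊔ W.prod W
      = W.comap (LinearMap.fst R M M - LinearMap.snd R M M) := by
  refine le_antisymm (sup_le ?_ ?_) fun p hp ↦ ?_
  · rintro _ ⟨z, -, rfl⟩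
    simp
  · rintro p ⟨h₁, h₂⟩
    exact sub_mem h₁ h₂
  · obtain ⟨z, hz, b, hb, hzb⟩ := mem_sup.1 (h.eq_top ▸ mem_top : p.2 ∈ Z ⊔ W)
    have hfst : p.1 - z = (p.1 - p.2) + b := by rw [← hzb]; abel
    refine mem_sup.2 ⟨(z, z), ⟨z, hz, rfl⟩, (p.1 - z, b), ⟨?_, hb⟩, ?_⟩
    · exact hfst ▸ add_mem hp hb
    · ext <;> simp [← hzb]

theorem disjoint_diagonal_prod {Z W : Submodule R M} (h : Disjoint Z W) :
    Disjoint (Z.map (LinearMap.id.prod LinearMap.id)) (W.prod W) := by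
  rw [disjoint_iff_inf_le]
  rintro _ ⟨⟨z, hz, rfl⟩, hzW, -⟩
  simpa using (disjoint_iff_inf_le.1 h) ⟨hz, hzW⟩

end Submodule

namespace LinearMap.BilinForm

theorem isCompl_orthogonal_of_disjoint {K V : Type*} [Field K] [AddCommGroup V] [Module K V]
    [FiniteDimensional K V] {B : LinearMap.BilinForm K V} {W : Submodule K V}
    (h : Disjoint W (B.orthogonal W)) : IsCompl W (B.orthogonal W) := by
  refine ⟨h, codisjoint_iff.2 <| Submodule.eq_top_of_finrank_eq <|
    (Submodule.finrank_le _).antisymm ?_⟩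
  have hdim := finrank_add_finrank_orthogonal' (B := B) W
  have hsup := Submodule.finrank_sup_add_finrank_inf_eq W (B.orthogonal W)
  rw [h.eq_bot, finrank_bot] at hsup
  omega

theorem orthogonal_diagonal_eq_comap_sub {R M : Type*} [CommRing R] [AddCommGroup M]
    [Module R M] {B : LinearMap.BilinForm R M} {Ω : LinearMap.BilinForm R (M × M)}
    (hΩ : ∀ p q : M × M, Ω p q = B p.1 q.1 - B p.2 q.2) (Z : Submodule R M) :
    Ω.orthogonal (Z.map (LinearMap.id.prod LinearMap.id))
      = (B.orthogonal Z).comap (LinearMap.fst R M M - LinearMap.snd R M M) := by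
  ext p
  simp [mem_orthogonal_iff, hΩ]

end LinearMap.BilinForm

open LinearMap.BilinForm Submodule in
theorem stmt0_general (V : Type*) [AddCommGroup V] [Module ℝ V] [FiniteDimensional ℝ V]
    (ω : LinearMap.BilinForm ℝ V)
    (Z : Submodule ℝ V) (hZ : Z ⊓ ω.orthogonal Z = ⊥)
    (Ω : LinearMap.BilinForm ℝ (V × V))
    (hΩ : ∀ p q : V × V, Ω p q = ω p.1 q.1 - ω p.2 q.2)
    (ΔZ : Submodule ℝ (V × V))
    (hΔ : ΔZ = Z.map ((LinearMap.id : V →ₗ[ℝ] V).prod LinearMap.id)) :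
    Ω.orthogonal ΔZ
        = (ω.orthogonal Z).comap (LinearMap.fst ℝ V V - LinearMap.snd ℝ V V) ∧
    Ω.orthogonal ΔZ = ΔZ ⊔ (ω.orthogonal Z).prod (ω.orthogonal Z) ∧
    ΔZ ⊓ (ω.orthogonal Z).prod (ω.orthogonal Z) = ⊥ ∧
    Nonempty ((↥(Ω.orthogonal ΔZ) ⧸ ΔZ.comap (Ω.orthogonal ΔZ).subtype) ≃ₗ[ℝ]
      (↥(ω.orthogonal Z) × ↥(ω.orthogonal Z))) := by
  subst hΔ
  have hcompl := isCompl_orthogonal_of_disjoint (disjoint_iff.2 hZ)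
  have horth := orthogonal_diagonal_eq_comap_sub hΩ Z
  have hsup := horth.trans (diagonal_sup_prod_eq_comap_sub hcompl.codisjoint).symm
  have hdisj := disjoint_diagonal_prod hcompl.disjoint
  refine ⟨horth, hsup, hdisj.eq_bot, ?_⟩
  rw [hsup, sup_comm]
  exact ⟨(supQuotientEquivOfDisjoint hdisj.symm).trans (prodEquivProd _ _)⟩

/-- Let `(V, ω)` be a finite-dimensional real symplectic vector space and
`Z ⊆ V` a symplectic subspace (`Z ∩ Z^⊥ = 0`).  Equip `V × V` with the form
`Ω((v₁,v₂),(w₁,w₂)) = ω(v₁,w₁) − ω(v₂,w₂)` and let `Δ_Z` be the diagonal copy of `Z`.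
Then `(Δ_Z)^⊥ = {(v,w) : v − w ∈ Z^⊥}`, this space is the internal direct sum
`Δ_Z ⊕ (Z^⊥ × Z^⊥)`, and the quotient `(Δ_Z)^⊥ / Δ_Z` is linearly isomorphic to
`Z^⊥ × Z^⊥`. -/
theorem stmt0 (V : Type*) [AddCommGroup V] [Module ℝ V] [FiniteDimensional ℝ V]
    (ω : LinearMap.BilinForm ℝ V) (halt : ∀ v, ω v v = 0)
    (hnd : ω.Nondegenerate)
    (Z : Submodule ℝ V) (hZ : Z ⊓ ω.orthogonal Z = ⊥)
    (Ω : LinearMap.BilinForm ℝ (V × V))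
    (hΩ : ∀ p q : V × V, Ω p q = ω p.1 q.1 - ω p.2 q.2)
    (ΔZ : Submodule ℝ (V × V))
    (hΔ : ΔZ = Z.map ((LinearMap.id : V →ₗ[ℝ] V).prod LinearMap.id)) :
    Ω.orthogonal ΔZ
        = (ω.orthogonal Z).comap (LinearMap.fst ℝ V V - LinearMap.snd ℝ V V) ∧
    Ω.orthogonal ΔZ = ΔZ ⊔ (ω.orthogonal Z).prod (ω.orthogonal Z) ∧
    ΔZ ⊓ (ω.orthogonal Z).prod (ω.orthogonal Z) = ⊥ ∧
    Nonempty ((↥(Ω.orthogonal ΔZ) ⧸ ΔZ.comap (Ω.orthogonal ΔZ).subtype) ≃ₗ[ℝ]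
      (↥(ω.orthogonal Z) × ↥(ω.orthogonal Z))) :=
  stmt0_general V ω Z hZ Ω hΩ ΔZ hΔ
end

section
/- Let (V, ω) be a finite-dimensional real symplectic vector space, let Z ⊆ V be a symplectic subspace, and let Y ⊆ V be a Lagrangian subspace such that Y ∩ Z is a Lagrangian subspace of the symplectic vector space Z. Then Y is the internal direct sum (Y ∩ Z) ⊕ (Y ∩ Z^⊥), and Y ∩ Z^⊥ is a Lagrangian subspace of the symplectic vector space Z^⊥. -/
/-!
Since `Z` is symplectic, `V = Z ⊕ Z^⊥`, so every `y ∈ Y` splits as `y = z + w` with `z ∈ Z` and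
`w ∈ Z^⊥`. Both `y` (as `Y` is isotropic) and `w` are orthogonal to `Y ∩ Z`, hence so is `z`;
since `Y ∩ Z` is Lagrangian in `Z`, this forces `z ∈ Y ∩ Z`, and then `w = y - z ∈ Y ∩ Z^⊥`.
From this splitting, `Y = Y^⊥ = (Y ∩ Z)^⊥ ∩ (Y ∩ Z^⊥)^⊥`, and intersecting with
`Z^⊥ ⊆ (Y ∩ Z)^⊥` shows that `Y ∩ Z^⊥` is Lagrangian in `Z^⊥`.
-/

namespace LinearMap.BilinForm

variable {R M : Type*} [CommRing R] [AddCommGroup M] [Module R M] {B : LinearMap.BilinForm R M}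

theorem orthogonal_sup (N L : Submodule R M) :
    B.orthogonal (N ⊔ L) = B.orthogonal N ⊓ B.orthogonal L := by
  refine le_antisymm (le_inf (orthogonal_le le_sup_left) (orthogonal_le le_sup_right)) ?_
  rintro u ⟨huN, huL⟩ n hn
  obtain ⟨a, ha, b, hb, rfl⟩ := Submodule.mem_sup.mp hn
  rw [add_left, huN a ha, huL b hb, add_zero]

theorem eq_inf_sup_inf_orthogonal {Y Z : Submodule R M} (hY : Y ≤ B.orthogonal Y)
    (hZ : Z ⊔ B.orthogonal Z = ⊤) (hYZ : Z ⊓ B.orthogonal (Y ⊓ Z) ≤ Y) :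
    Y = Y ⊓ Z ⊔ Y ⊓ B.orthogonal Z := by
  refine le_antisymm (fun y hy => ?_) (sup_le inf_le_left inf_le_left)
  obtain ⟨z, hz, w, hw, rfl⟩ := Submodule.mem_sup.mp (hZ ▸ Submodule.mem_top : y ∈ Z ⊔ _)
  have hzY : z ∈ Y := hYZ ⟨hz, fun u hu => by
    have hyu : B u (z + w) = 0 := hY hy u hu.1
    rwa [add_right, hw u hu.2, add_zero] at hyu⟩
  have hwY : w ∈ Y := (Y.add_mem_iff_right hzY).mp hy
  exact Submodule.add_mem_sup ⟨hzY, hz⟩ ⟨hwY, hw⟩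

theorem inf_orthogonal_eq_orthogonal_inf_orthogonal {Y Z : Submodule R M}
    (hY : Y = B.orthogonal Y) (hdecomp : Y = Y ⊓ Z ⊔ Y ⊓ B.orthogonal Z) :
    Y ⊓ B.orthogonal Z = B.orthogonal Z ⊓ B.orthogonal (Y ⊓ B.orthogonal Z) := by
  have hYperp : B.orthogonal Y =
      B.orthogonal (Y ⊓ Z) ⊓ B.orthogonal (Y ⊓ B.orthogonal Z) := by
    rw [← orthogonal_sup, ← hdecomp]
  have hZperp : B.orthogonal Z ≤ B.orthogonal (Y ⊓ Z) := orthogonal_le inf_le_right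
  calc Y ⊓ B.orthogonal Z = B.orthogonal Y ⊓ B.orthogonal Z := by rw [← hY]
    _ = B.orthogonal Z ⊓ B.orthogonal (Y ⊓ B.orthogonal Z) := by
      rw [hYperp, inf_right_comm, inf_eq_right.mpr hZperp]

end LinearMap.BilinForm

open LinearMap.BilinForm in
theorem stmt1_general (V : Type*) [AddCommGroup V] [Module ℝ V] [FiniteDimensional ℝ V]
    (ω : LinearMap.BilinForm ℝ V) (halt : ∀ v, ω v v = 0)
    (Z Y : Submodule ℝ V)
    (hZ : Z ⊓ ω.orthogonal Z = ⊥)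
    (hY : Y = ω.orthogonal Y)
    (hYZ : Y ⊓ Z = Z ⊓ ω.orthogonal (Y ⊓ Z)) :
    Y = (Y ⊓ Z) ⊔ (Y ⊓ ω.orthogonal Z) ∧
    (Y ⊓ Z) ⊓ (Y ⊓ ω.orthogonal Z) = ⊥ ∧
    Y ⊓ ω.orthogonal Z = ω.orthogonal Z ⊓ ω.orthogonal (Y ⊓ ω.orthogonal Z) := by
  have hcompl : Z ⊔ ω.orthogonal Z = ⊤ :=
    ((isCompl_orthogonal_iff_disjoint (IsAlt.isRefl halt)).mpr (disjoint_iff.mpr hZ)).sup_eq_top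
  have hdecomp := eq_inf_sup_inf_orthogonal hY.le hcompl (hYZ.ge.trans inf_le_left)
  refine ⟨hdecomp, ?_, inf_orthogonal_eq_orthogonal_inf_orthogonal hY hdecomp⟩
  exact le_bot_iff.mp (hZ ▸ inf_le_inf inf_le_right inf_le_right)

/-- Let `(V, ω)` be a finite-dimensional real symplectic vector space,
`Z ⊆ V` a symplectic subspace (`Z ∩ Z^⊥ = 0`), and `Y ⊆ V` a Lagrangian subspace
(`Y = Y^⊥`) such that `Y ∩ Z` is a Lagrangian subspace of `Z`
(`Y ∩ Z = {u ∈ Z : ω(u,v) = 0 for all v ∈ Y ∩ Z}`).  Then `Y` is the internal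
direct sum `(Y ∩ Z) ⊕ (Y ∩ Z^⊥)`, and `Y ∩ Z^⊥` is a Lagrangian subspace of `Z^⊥`. -/
theorem stmt1 (V : Type*) [AddCommGroup V] [Module ℝ V] [FiniteDimensional ℝ V]
    (ω : LinearMap.BilinForm ℝ V) (halt : ∀ v, ω v v = 0)
    (hnd : ω.Nondegenerate)
    (Z Y : Submodule ℝ V)
    (hZ : Z ⊓ ω.orthogonal Z = ⊥)
    (hY : Y = ω.orthogonal Y)
    (hYZ : Y ⊓ Z = Z ⊓ ω.orthogonal (Y ⊓ Z)) :
    Y = (Y ⊓ Z) ⊔ (Y ⊓ ω.orthogonal Z) ∧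
    (Y ⊓ Z) ⊓ (Y ⊓ ω.orthogonal Z) = ⊥ ∧
    Y ⊓ ω.orthogonal Z = ω.orthogonal Z ⊓ ω.orthogonal (Y ⊓ ω.orthogonal Z) :=
  stmt1_general V ω halt Z Y hZ hY hYZ
end

section
/- Let n be a positive integer and let A, B, D, H be real n×n matrices with A, D, H symmetric, satisfying A·D − B·B = I, Bᵗ·D = D·B, and A·Bᵗ = B·A. Assume D is invertible and that the complex matrix I + iBᵗ + iDH is invertible, and set M = (I + iBᵗ + iDH)⁻¹·D. Then the matrix G = A + BH + HBᵗ + HDH is invertible, and for all vectors q', p' ∈ ℝⁿ one has the identity of complex numbers: p'ᵗq' − q'ᵗHq' + i·(p' − Hq')ᵗ·M·(p' − Hq') = (p' − Hq')ᵗ · G⁻¹ · [ (A + HBᵗ)q' + (B + HD)p' + i(p' − Hq') ]. -/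
/-!
Put `X = B + HD` and `Y = Bᵀ + DH`. The compatibility identities give `DX = YD` and
`GD = 1 + X² = (1 - iX)(1 + iX)`, hence `D(1 + iX) = (1 + iY)D` and
`M = (1 + iY)⁻¹D = D(1 + iX)⁻¹`. Since `1 - iX` is the complex conjugate of `1 + iX`, the
matrix `G` is invertible, and `G(iM) = i(1 - iX) = X + i`. The vector in brackets is
`Gq' + (X + i)(p' - Hq')`, so applying `G⁻¹` turns the right-hand side into
`(p' - Hq')ᵗq' + i(p' - Hq')ᵗM(p' - Hq')`.
-/

open Matrix Complex

section RingIdentities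

variable {R : Type*} [Ring R] {A B C D H : R}

theorem mul_add_mul_eq_add_mul_mul (h2 : C * D = D * B) :
    D * (B + H * D) = (C + D * H) * D := by
  rw [mul_add, add_mul, h2, mul_assoc]

theorem add_add_add_mul_eq_one_add_mul_self (h1 : A * D - B * B = 1) (h2 : C * D = D * B) :
    (A + B * H + H * C + H * D * H) * D = 1 + (B + H * D) * (B + H * D) := by
  have hAD : A * D = 1 + B * B := by rw [← h1]; abel
  calc (A + B * H + H * C + H * D * H) * D
      = A * D + B * H * D + H * (C * D) + H * D * H * D := by noncomm_ring
    _ = 1 + (B + H * D) * (B + H * D) := by rw [hAD, h2]; noncomm_ring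

end RingIdentities

theorem one_sub_I_smul_mul_one_add_I_smul {R : Type*} [Ring R] [Algebra ℂ R] (x : R) :
    (1 - I • x) * (1 + I • x) = 1 + x * x := by
  have : (I • x) * (I • x) = -(x * x) := by
    rw [smul_mul_smul_comm, I_mul_I, neg_one_smul]
  rw [← (Commute.one_left (I • x)).mul_self_sub_mul_self_eq', mul_one, this, sub_neg_eq_add]

variable {m : Type*} [Fintype m]

theorem sub_mulVec_dotProduct_eq {R : Type*} [CommRing R] {H : Matrix m m R} (hH : Hᵀ = H)
    (q p : m → R) : (p - H *ᵥ q) ⬝ᵥ q = p ⬝ᵥ q - q ⬝ᵥ (H *ᵥ q) := by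
  rw [sub_dotProduct, dotProduct_comm (H *ᵥ q), ← vecMul_transpose, hH]

variable [DecidableEq m]

theorem add_mulVec_add_smul_sub_eq {R : Type*} [CommRing R] (A B C D H : Matrix m m R)
    (q p : m → R) (c : R) :
    (A + H * C) *ᵥ q + (B + H * D) *ᵥ p + c • (p - H *ᵥ q) =
      (A + B * H + H * C + H * D * H) *ᵥ q + (B + H * D + c • 1) *ᵥ (p - H *ᵥ q) := by
  simp only [add_mulVec, mulVec_sub, smul_mulVec, one_mulVec, smul_sub, ← mulVec_mulVec]
  abel

theorem Matrix.isUnit_of_isUnit_map {K L : Type*} [Field K] [CommRing L] [Nontrivial L]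
    (f : K →+* L) {M : Matrix m m K} (h : IsUnit (M.map f)) : IsUnit M := by
  rw [isUnit_iff_isUnit_det] at h ⊢
  rw [← RingHom.mapMatrix_apply, ← RingHom.map_det] at h
  refine isUnit_iff_ne_zero.mpr fun h0 => ?_
  simp [h0] at h

theorem isUnit_one_sub_I_smul_mapMatrix_ofReal {X : Matrix m m ℝ}
    (h : IsUnit (1 + I • ofRealHom.mapMatrix X)) : IsUnit (1 - I • ofRealHom.mapMatrix X) := by
  convert h.map (starRingEnd ℂ).mapMatrix using 1
  ext i j
  by_cases hij : i = j <;> simp [one_apply, hij, sub_eq_add_neg]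

section Conjugation

variable {D G X Y : Matrix m m ℂ}

theorem mul_one_add_I_smul_eq (hDX : D * X = Y * D) : D * (1 + I • X) = (1 + I • Y) * D := by
  rw [mul_add, add_mul, mul_one, one_mul, mul_smul_comm, smul_mul_assoc, hDX]

theorem isUnit_one_add_I_smul_of_mul_eq (hDX : D * X = Y * D) (hD : IsUnit D)
    (hY : IsUnit (1 + I • Y)) : IsUnit (1 + I • X) :=
  isUnit_of_mul_isUnit_right (x := D) (mul_one_add_I_smul_eq hDX ▸ hY.mul hD)

theorem inv_mul_add_I_smul_one_eq (hDX : D * X = Y * D) (hGD : G * D = 1 + X * X)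
    (hG : IsUnit G) (hD : IsUnit D) (hY : IsUnit (1 + I • Y)) :
    G⁻¹ * (X + I • 1) = I • ((1 + I • Y)⁻¹ * D) := by
  have hP := (isUnit_iff_isUnit_det _).mp (isUnit_one_add_I_smul_of_mul_eq hDX hD hY)
  have hW := (isUnit_iff_isUnit_det _).mp hY
  have hWD : (1 + I • Y)⁻¹ * D = D * (1 + I • X)⁻¹ := by
    rw [← mul_nonsing_inv_cancel_right _ ((1 + I • Y)⁻¹ * D) hP, mul_assoc _ D,
      mul_one_add_I_smul_eq hDX, ← mul_assoc, nonsing_inv_mul _ hW, one_mul]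
  have hGD' : G * D = (1 - I • X) * (1 + I • X) := by
    rw [hGD, one_sub_I_smul_mul_one_add_I_smul]
  suffices G * (I • (D * (1 + I • X)⁻¹)) = X + I • 1 by
    rw [hWD, ← this, nonsing_inv_mul_cancel_left _ _ ((isUnit_iff_isUnit_det _).mp hG)]
  rw [mul_smul_comm, ← mul_assoc, hGD', mul_nonsing_inv_cancel_right _ _ hP, smul_sub, smul_smul,
    I_mul_I, neg_one_smul, sub_neg_eq_add, add_comm]

theorem isUnit_of_mul_eq_one_add_mul_self (hDX : D * X = Y * D)
    (hGD : G * D = 1 + X * X) (hD : IsUnit D) (hY : IsUnit (1 + I • Y))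
    (hX : IsUnit (1 - I • X)) : IsUnit G := by
  refine isUnit_of_mul_isUnit_left (y := D) ?_
  rw [hGD, ← one_sub_I_smul_mul_one_add_I_smul]
  exact hX.mul (isUnit_one_add_I_smul_of_mul_eq hDX hD hY)

end Conjugation

theorem dotProduct_inv_mulVec_add_mulVec_eq {G X M : Matrix m m ℂ} (hG : IsUnit G)
    (hXM : G⁻¹ * (X + I • 1) = I • M) (g q : m → ℂ) :
    g ⬝ᵥ (G⁻¹ *ᵥ (G *ᵥ q + (X + I • 1) *ᵥ g)) = g ⬝ᵥ q + I * (g ⬝ᵥ (M *ᵥ g)) := by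
  rw [mulVec_add, mulVec_mulVec, mulVec_mulVec,
    nonsing_inv_mul _ ((isUnit_iff_isUnit_det _).mp hG), one_mulVec, hXM, smul_mulVec,
    dotProduct_add, dotProduct_smul, smul_eq_mul]

theorem hessian_formula {A B C D G H : Matrix m m ℂ} (hG : A + B * H + H * C + H * D * H = G)
    (hH : Hᵀ = H) (h1 : A * D - B * B = 1) (h2 : C * D = D * B) (hD : IsUnit D)
    (hW : IsUnit (1 + I • C + I • (D * H))) (hX : IsUnit (1 - I • (B + H * D))) :
    IsUnit G ∧ ∀ q p : m → ℂ,
      p ⬝ᵥ q - q ⬝ᵥ (H *ᵥ q) +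
          I * ((p - H *ᵥ q) ⬝ᵥ (((1 + I • C + I • (D * H))⁻¹ * D) *ᵥ (p - H *ᵥ q))) =
        (p - H *ᵥ q) ⬝ᵥ (G⁻¹ *ᵥ ((A + H * C) *ᵥ q + (B + H * D) *ᵥ p + I • (p - H *ᵥ q))) := by
  subst hG
  have hW' : 1 + I • C + I • (D * H) = 1 + I • (C + D * H) := by rw [smul_add, add_assoc]
  rw [hW'] at hW ⊢
  have hDX := mul_add_mul_eq_add_mul_mul (H := H) h2
  have hGD := add_add_add_mul_eq_one_add_mul_self (H := H) h1 h2
  have hG := isUnit_of_mul_eq_one_add_mul_self hDX hGD hD hW hX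
  refine ⟨hG, fun q p => ?_⟩
  rw [add_mulVec_add_smul_sub_eq, dotProduct_inv_mulVec_add_mulVec_eq hG
    (inv_mul_add_I_smul_one_eq hDX hGD hG hD hW), sub_mulVec_dotProduct_eq hH]

theorem stmt4_general (n : ℕ) (A B D H : Matrix (Fin n) (Fin n) ℝ)
    (hH : H.IsSymm)
    (h1 : A * D - B * B = 1) (h2 : Bᵀ * D = D * B)
    (hDinv : IsUnit D)
    (hinv : IsUnit ((1 : Matrix (Fin n) (Fin n) ℂ)
      + Complex.I • (B.map Complex.ofReal)ᵀ
      + Complex.I • (D.map Complex.ofReal * H.map Complex.ofReal))) :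
    IsUnit (A + B * H + H * Bᵀ + H * D * H) ∧
    ∀ q' p' : Fin n → ℝ,
      let Ac := A.map Complex.ofReal
      let Bc := B.map Complex.ofReal
      let Dc := D.map Complex.ofReal
      let Hc := H.map Complex.ofReal
      let M := ((1 : Matrix (Fin n) (Fin n) ℂ) + Complex.I • Bcᵀ + Complex.I • (Dc * Hc))⁻¹ * Dc
      let Gc := (A + B * H + H * Bᵀ + H * D * H).map Complex.ofReal
      let qc : Fin n → ℂ := fun i => (q' i : ℂ)
      let pc : Fin n → ℂ := fun i => (p' i : ℂ)
      let gc : Fin n → ℂ := pc - Hc *ᵥ qc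
      pc ⬝ᵥ qc - qc ⬝ᵥ (Hc *ᵥ qc) + Complex.I * (gc ⬝ᵥ (M *ᵥ gc))
        = gc ⬝ᵥ (Gc⁻¹ *ᵥ ((Ac + Hc * Bcᵀ) *ᵥ qc + (Bc + Hc * Dc) *ᵥ pc + Complex.I • gc)) := by
  let φ : Matrix (Fin n) (Fin n) ℝ →+* Matrix (Fin n) (Fin n) ℂ := ofRealHom.mapMatrix
  have h1c : φ A * φ D - φ B * φ B = 1 := by
    simpa only [map_sub, map_mul, map_one] using congrArg φ h1
  have h2c : φ Bᵀ * φ D = φ D * φ B := by simpa only [map_mul] using congrArg φ h2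
  have hDc : IsUnit (φ D) := hDinv.map φ
  have hP : IsUnit (1 + I • φ (B + H * D)) := by
    simpa only [map_add, map_mul] using isUnit_one_add_I_smul_of_mul_eq
      (mul_add_mul_eq_add_mul_mul (H := φ H) h2c) hDc (by rwa [smul_add, ← add_assoc])
  have hX := isUnit_one_sub_I_smul_mapMatrix_ofReal hP
  simp only [map_add, map_mul] at hX
  -- `hinv` is accepted as is: `(B.map ofReal)ᵀ` and `φ Bᵀ` agree definitionally.
  obtain ⟨hG, hformula⟩ := hessian_formula (H := φ H)
    (G := φ (A + B * H + H * Bᵀ + H * D * H)) (by simp only [map_add, map_mul])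
    (congrArg φ hH) h1c h2c hDc hinv hX
  exact ⟨isUnit_of_isUnit_map ofRealHom hG, fun q p => hformula _ _⟩

/-- the Hessian identity
`p'ᵗq' − q'ᵗHq' + i(p'−Hq')ᵗM(p'−Hq') = (p'−Hq')ᵗ G⁻¹ [(A+HBᵗ)q' + (B+HD)p' + i(p'−Hq')]`
with `M = (I+iBᵗ+iDH)⁻¹D` and `G = A + BH + HBᵗ + HDH`, under the metric/symplectic
compatibility identities `AD − BB = I`, `BᵗD = DB`, `ABᵗ = BA` (A, D, H symmetric),
`D` invertible and `I + iBᵗ + iDH` invertible; moreover `G` is invertible. -/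
theorem stmt4 (n : ℕ) (hn : 0 < n) (A B D H : Matrix (Fin n) (Fin n) ℝ)
    (hA : A.IsSymm) (hD : D.IsSymm) (hH : H.IsSymm)
    (h1 : A * D - B * B = 1) (h2 : Bᵀ * D = D * B) (h3 : A * Bᵀ = B * A)
    (hDinv : IsUnit D)
    (hinv : IsUnit ((1 : Matrix (Fin n) (Fin n) ℂ)
      + Complex.I • (B.map Complex.ofReal)ᵀ
      + Complex.I • (D.map Complex.ofReal * H.map Complex.ofReal))) :
    IsUnit (A + B * H + H * Bᵀ + H * D * H) ∧
    ∀ q' p' : Fin n → ℝ,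
      let Ac := A.map Complex.ofReal
      let Bc := B.map Complex.ofReal
      let Dc := D.map Complex.ofReal
      let Hc := H.map Complex.ofReal
      let M := ((1 : Matrix (Fin n) (Fin n) ℂ) + Complex.I • Bcᵀ + Complex.I • (Dc * Hc))⁻¹ * Dc
      let Gc := (A + B * H + H * Bᵀ + H * D * H).map Complex.ofReal
      let qc : Fin n → ℂ := fun i => (q' i : ℂ)
      let pc : Fin n → ℂ := fun i => (p' i : ℂ)
      let gc : Fin n → ℂ := pc - Hc *ᵥ qc
      pc ⬝ᵥ qc - qc ⬝ᵥ (Hc *ᵥ qc) + Complex.I * (gc ⬝ᵥ (M *ᵥ gc))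
        = gc ⬝ᵥ (Gc⁻¹ *ᵥ ((Ac + Hc * Bcᵀ) *ᵥ qc + (Bc + Hc * Dc) *ᵥ pc + Complex.I • gc)) :=
  stmt4_general n A B D H hH h1 h2 hDinv hinv
end

section
/- Let k ≥ 1 be an integer and let z, w ∈ ℂ with Im z > 0 and Im w > 0. Then the series ∑_{l=0}^∞ (2^{4k−2}/π) · ((2k+l−1)!/((2k−2)!·l!)) · (z−i)^l·(conj(w)+i)^l / ((z+i)^{l+2k}·(conj(w)−i)^{l+2k}) converges (HasSum) with sum A_k · (z − conj(w))^{−2k}, where A_k = (−1)^k · 2^{2k−2} · (2k−1)/π. -/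
/-!
Let `u = (z - i)(conj w + i) / ((z + i)(conj w - i))`, the Cayley transform of `z` times the
conjugate of that of `w`, so `‖u‖ < 1`. The `l`-th term is
`2^{4k-2}/π · (2k-1) · C(l+2k-1, 2k-1) · u^l / ((z + i)(conj w - i))^{2k}`, and the negative
binomial series sums it to `2^{4k-2}(2k-1)/π` divided by
`((z + i)(conj w - i)(1 - u))^{2k} = (-2i (z - conj w))^{2k}`.
-/

open Complex (I)

theorem hasSum_factorial_div_mul_geometric {𝕜 : Type*} [NormedField 𝕜] [CharZero 𝕜]
    (n : ℕ) {r : 𝕜} (hr : ‖r‖ < 1) :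
    HasSum (fun l : ℕ => ((n + l + 1).factorial : 𝕜) / (n.factorial * l.factorial) * r ^ l)
      ((n + 1) / (1 - r) ^ (n + 2)) := by
  have key := (hasSum_choose_mul_geometric_of_norm_lt_one (n + 1) hr).mul_left ((n : 𝕜) + 1)
  rw [mul_one_div] at key
  refine key.congr_fun fun l => ?_
  have hfac : (n.factorial : 𝕜) * l.factorial ≠ 0 := by
    exact_mod_cast mul_ne_zero n.factorial_ne_zero l.factorial_ne_zero
  rw [show n + l + 1 = l + (n + 1) by ring, ← Nat.add_choose_mul_factorial_mul_factorial,
    Nat.factorial_succ]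
  push_cast
  rw [div_mul_eq_mul_div, div_eq_iff hfac]
  ring

theorem mul_mul_pow_mul_pow_div_pow_add_mul_pow_add {K : Type*} [Field K] (c r a b A B : K)
    (l n : ℕ) (hA : A ≠ 0) (hB : B ≠ 0) :
    c * r * a ^ l * b ^ l / (A ^ (l + n) * B ^ (l + n)) =
      c / (A * B) ^ n * (r * (a * b / (A * B)) ^ l) := by
  rw [div_pow, mul_pow, mul_pow, mul_pow, pow_add, pow_add]
  field_simp

theorem div_pow_mul_div_one_sub_div_pow {K : Type*} [Field K] (c r N D : K) (n : ℕ)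
    (hD : D ≠ 0) : c / D ^ n * (r / (1 - N / D) ^ n) = c * r / (D - N) ^ n := by
  rw [one_sub_div hD, div_pow]
  field_simp

theorem add_I_ne_zero_of_im_pos {z : ℂ} (hz : 0 < z.im) : z + I ≠ 0 := by
  intro h
  have := congrArg Complex.im h
  simp at this
  linarith

theorem conj_sub_I_ne_zero_of_im_pos {w : ℂ} (hw : 0 < w.im) : starRingEnd ℂ w - I ≠ 0 := by
  rw [show starRingEnd ℂ w - I = starRingEnd ℂ (w + I) by simp [sub_eq_add_neg], map_ne_zero]
  exact add_I_ne_zero_of_im_pos hw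

theorem norm_sub_I_div_add_I_lt_one {z : ℂ} (hz : 0 < z.im) : ‖(z - I) / (z + I)‖ < 1 := by
  rw [norm_div, div_lt_one (norm_pos_iff.2 (add_I_ne_zero_of_im_pos hz)),
    ← sq_lt_sq₀ (norm_nonneg _) (norm_nonneg _),
    Complex.sq_norm, Complex.sq_norm, Complex.normSq_apply, Complex.normSq_apply]
  simp only [Complex.sub_re, Complex.sub_im, Complex.add_re, Complex.add_im,
    Complex.I_re, Complex.I_im]
  nlinarith

theorem norm_cayley_mul_conj_cayley_lt_one {z w : ℂ} (hz : 0 < z.im) (hw : 0 < w.im) :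
    ‖(z - I) * (starRingEnd ℂ w + I) / ((z + I) * (starRingEnd ℂ w - I))‖ < 1 := by
  have hconj : (starRingEnd ℂ w + I) / (starRingEnd ℂ w - I) =
      starRingEnd ℂ ((w - I) / (w + I)) := by
    simp [map_div₀, sub_eq_add_neg]
  rw [mul_div_mul_comm, norm_mul, hconj, Complex.norm_conj]
  exact mul_lt_one_of_nonneg_of_lt_one_left (norm_nonneg _) (norm_sub_I_div_add_I_lt_one hz)
    (norm_sub_I_div_add_I_lt_one hw).le

theorem neg_two_mul_I_pow_two_mul (n : ℕ) : (-2 * I) ^ (2 * n) = ((-1) ^ n)⁻¹ * 2 ^ (2 * n) := by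
  have hsq : (-2 * I) ^ 2 = -1 * 2 ^ 2 := by rw [mul_pow, Complex.I_sq]; norm_num
  rw [← inv_pow, inv_neg_one, pow_mul, pow_mul, hsq, mul_pow]

theorem sub_conj_ne_zero_of_im_pos {z w : ℂ} (hz : 0 < z.im) (hw : 0 < w.im) :
    z - starRingEnd ℂ w ≠ 0 := by
  intro h
  have := congrArg Complex.im h
  simp at this
  linarith

theorem ofReal_mul_zpow_neg_eq_div_neg_two_mul_I_mul_pow (m : ℕ) {x : ℂ} (hx : x ≠ 0) :
    ((((-1 : ℝ) ^ (m + 1) * 2 ^ (2 * (m + 1) - 2) * (2 * ((m + 1 : ℕ) : ℝ) - 1) /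
        Real.pi : ℝ)) : ℂ) * x ^ (-(2 * ((m + 1 : ℕ) : ℤ))) =
      (((2 : ℝ) ^ (4 * m + 2) / Real.pi : ℝ) : ℂ) * (((2 * m : ℕ) : ℂ) + 1) /
        (-2 * I * x) ^ (2 * m + 2) := by
  rw [mul_pow, show 2 * m + 2 = 2 * (m + 1) by ring, neg_two_mul_I_pow_two_mul,
    show 2 * (m + 1) - 2 = 2 * m by omega, zpow_neg,
    show 2 * ((m + 1 : ℕ) : ℤ) = ((2 * (m + 1) : ℕ) : ℤ) by push_cast; ring, zpow_natCast,
    div_eq_mul_inv _ (_ * _), mul_inv, mul_inv, inv_inv]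
  push_cast
  field_simp
  ring

/-- expansion of the reproducing kernel over the orthonormal basis:
for `z, w` in the upper half-plane, the series
`∑_l (2^{4k−2}/π)((2k+l−1)!/((2k−2)! l!)) (z−i)^l (conj w + i)^l /((z+i)^{l+2k}(conj w − i)^{l+2k})`
sums to `A_k (z − conj w)^{−2k}` with `A_k = (−1)^k 2^{2k−2}(2k−1)/π`. -/
theorem stmt8 (k : ℕ) (hk : 1 ≤ k) (z w : ℂ) (hz : 0 < z.im) (hw : 0 < w.im) :
    HasSum (fun l : ℕ =>
      (((2 : ℝ) ^ (4 * k - 2) / Real.pi : ℝ) : ℂ) *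
        ((Nat.factorial (2 * k + l - 1) : ℂ) /
          ((Nat.factorial (2 * k - 2) : ℂ) * (Nat.factorial l : ℂ))) *
        (z - Complex.I) ^ l * ((starRingEnd ℂ) w + Complex.I) ^ l /
        ((z + Complex.I) ^ (l + 2 * k) * ((starRingEnd ℂ) w - Complex.I) ^ (l + 2 * k)))
      (((((-1 : ℝ) ^ k * 2 ^ (2 * k - 2) * (2 * (k : ℝ) - 1) / Real.pi : ℝ)) : ℂ) *
        (z - (starRingEnd ℂ) w) ^ (-(2 * (k : ℤ)))) := by
  obtain ⟨m, rfl⟩ : ∃ m, k = m + 1 := ⟨k - 1, by omega⟩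
  have hzI := add_I_ne_zero_of_im_pos hz
  have hwI := conj_sub_I_ne_zero_of_im_pos hw
  set ζ := starRingEnd ℂ w
  have key := (hasSum_factorial_div_mul_geometric (2 * m)
    (norm_cayley_mul_conj_cayley_lt_one hz hw)).mul_left
      ((((2 : ℝ) ^ (4 * m + 2) / Real.pi : ℝ) : ℂ) / ((z + I) * (ζ - I)) ^ (2 * m + 2))
  rw [div_pow_mul_div_one_sub_div_pow _ _ _ _ _ (mul_ne_zero hzI hwI),
    show (z + I) * (ζ - I) - (z - I) * (ζ + I) = -2 * I * (z - ζ) by ring,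
    ← ofReal_mul_zpow_neg_eq_div_neg_two_mul_I_mul_pow m (sub_conj_ne_zero_of_im_pos hz hw)] at key
  refine key.congr_fun fun l => ?_
  rw [show 2 * (m + 1) + l - 1 = 2 * m + l + 1 by omega, show 2 * (m + 1) - 2 = 2 * m by omega,
    show 4 * (m + 1) - 2 = 4 * m + 2 by omega]
  exact mul_mul_pow_mul_pow_div_pow_add_mul_pow_add _ _ _ _ _ _ _ _ hzI hwI
end

section
/- Let k ≥ 1 be an integer and let z ∈ ℂ with Im z > 0. Then ∫_{−∞}^{∞} e^{kt} · (z + i e^t)^{−2k} dt = (−i)^k · ((k−1)!)² / (2k−1)! · z^{−k}. -/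
/-!
With `a = -i z` we have `Re a = Im z > 0` and `z + i e^t = i (e^t + a)`, so the integrand is
`(-1)^k e^{kt} / (e^t + a)^{2k}`. Under `s = e^t / (e^t + a)` this becomes
`a^{-k} s^{k-1} (1 - s)^{k-1} ds`, hence `t ↦ a^{-k} P(e^t / (e^t + a))` is a primitive, where `P`
is the polynomial primitive of `s^{k-1} (1 - s)^{k-1}` vanishing at `0` (a polynomial, since `s`
is complex). As `t` runs over `ℝ`, `s` moves from `0` to `1`, so the integral is
`a^{-k} P(1) = a^{-k} B(k, k) = a^{-k} ((k-1)!)² / (2k-1)!`.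
-/

open MeasureTheory Filter Set Topology Complex
open scoped Nat

noncomputable def betaPrimitive (n : ℕ) (s : ℂ) : ℂ :=
  ∑ j ∈ Finset.range (n + 1), (-1) ^ j * n.choose j / (n + 1 + j : ℕ) * s ^ (n + 1 + j)

theorem betaPrimitive_zero (n : ℕ) : betaPrimitive n 0 = 0 := by
  simp [betaPrimitive]

theorem hasDerivAt_betaPrimitive (n : ℕ) (s : ℂ) :
    HasDerivAt (betaPrimitive n) (s ^ n * (1 - s) ^ n) s := by
  have hterm (j : ℕ) :
      HasDerivAt (fun s : ℂ => (-1) ^ j * n.choose j / (n + 1 + j : ℕ) * s ^ (n + 1 + j))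
        ((-1) ^ j * n.choose j * s ^ (n + j)) s := by
    refine ((hasDerivAt_pow (n + 1 + j) s).const_mul _).congr_deriv ?_
    have hd : ((n + 1 + j : ℕ) : ℂ) ≠ 0 := Nat.cast_ne_zero.mpr (by omega)
    rw [show n + 1 + j - 1 = n + j by omega]
    field_simp
  refine (HasDerivAt.fun_sum (u := Finset.range (n + 1)) fun j _ => hterm j).congr_deriv ?_
  rw [sub_eq_neg_add, add_pow, Finset.mul_sum]
  refine Finset.sum_congr rfl fun j _ => ?_
  rw [one_pow, mul_one, neg_pow, pow_add]
  ring

theorem betaPrimitive_one (n : ℕ) : betaPrimitive n 1 = (n ! : ℂ) ^ 2 / (2 * n + 1)! := by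
  have hftc : ∫ x in (0 : ℝ)..1, (x : ℂ) ^ n * (1 - x) ^ n = betaPrimitive n 1 := by
    rw [intervalIntegral.integral_eq_sub_of_hasDerivAt
      (fun x _ => (hasDerivAt_betaPrimitive n x).comp_ofReal)
      ((by fun_prop : Continuous fun x : ℝ => (x : ℂ) ^ n * (1 - x) ^ n).intervalIntegrable 0 1)]
    simp [betaPrimitive_zero]
  have hbeta : betaIntegral (n + 1) (n + 1) = ∫ x in (0 : ℝ)..1, (x : ℂ) ^ n * (1 - x) ^ n := by
    simp only [betaIntegral, add_sub_cancel_right]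
    norm_cast
  have hpos : 0 < ((n : ℂ) + 1).re := by simp; positivity
  rw [← hftc, ← hbeta, betaIntegral_eq_Gamma_mul_div _ _ hpos hpos,
    show (n : ℂ) + 1 + (n + 1) = ((2 * n + 1 : ℕ) : ℂ) + 1 by push_cast; ring,
    Gamma_nat_eq_factorial, Gamma_nat_eq_factorial, sq]

section ExpSubstitution

variable {a : ℂ}

theorem exp_add_re_le_norm_exp_add (t : ℝ) : Real.exp t + a.re ≤ ‖(Real.exp t : ℂ) + a‖ := by
  have := re_le_norm ((Real.exp t : ℂ) + a)
  rwa [add_re, ofReal_re] at this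

theorem exp_add_ne_zero (ha : 0 < a.re) (t : ℝ) : (Real.exp t : ℂ) + a ≠ 0 :=
  norm_pos_iff.mp <| (add_pos (Real.exp_pos t) ha).trans_le (exp_add_re_le_norm_exp_add t)

theorem tendsto_exp_div_exp_add_atBot (ha : a ≠ 0) :
    Tendsto (fun t : ℝ => (Real.exp t : ℂ) / (Real.exp t + a)) atBot (𝓝 0) := by
  have h0 : Tendsto (fun t : ℝ => (Real.exp t : ℂ)) atBot (𝓝 0) := by
    rw [← ofReal_zero]; exact (continuous_ofReal.tendsto 0).comp Real.tendsto_exp_atBot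
  have := h0.div (h0.add_const a) (by rwa [zero_add])
  rwa [zero_div] at this

theorem tendsto_exp_div_exp_add_atTop :
    Tendsto (fun t : ℝ => (Real.exp t : ℂ) / (Real.exp t + a)) atTop (𝓝 1) := by
  have h0 : Tendsto (fun t : ℝ => (Real.exp (-t) : ℂ)) atTop (𝓝 0) := by
    rw [← ofReal_zero]
    exact (continuous_ofReal.tendsto 0).comp Real.tendsto_exp_neg_atTop_nhds_zero
  have h1 : Tendsto (fun t : ℝ => (1 + a * Real.exp (-t))⁻¹) atTop (𝓝 1) := by
    have := ((h0.const_mul a).const_add 1).inv₀ (by simp)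
    rwa [mul_zero, add_zero, inv_one] at this
  refine h1.congr fun t => ?_
  have he : (Real.exp t : ℂ) ≠ 0 := ofReal_ne_zero.mpr (Real.exp_pos t).ne'
  rw [show (Real.exp t : ℂ) + a = Real.exp t * (1 + a * Real.exp (-t)) by
    rw [Real.exp_neg, ofReal_inv]; field_simp, div_mul_cancel_left₀ he]

theorem hasDerivAt_betaPrimitive_exp_div (n : ℕ) (ha : 0 < a.re) (t : ℝ) :
    HasDerivAt (fun t : ℝ => betaPrimitive n (Real.exp t / (Real.exp t + a)) / a ^ (n + 1))
      ((Real.exp t : ℂ) ^ (n + 1) / ((Real.exp t : ℂ) + a) ^ (2 * n + 2)) t := by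
  have hd := exp_add_ne_zero ha t
  have ha0 := ne_zero_of_re_pos ha
  have hexp : HasDerivAt (fun t : ℝ => (Real.exp t : ℂ)) (Real.exp t) t :=
    (Real.hasDerivAt_exp t).ofReal_comp
  refine (((hasDerivAt_betaPrimitive n _).comp t
    (hexp.div (hexp.add_const a) hd)).div_const _).congr_deriv ?_
  simp only [Pi.div_apply]
  rw [show 1 - (Real.exp t : ℂ) / (Real.exp t + a) = a / (Real.exp t + a) by field_simp; ring,
    div_pow, div_pow]
  field_simp
  ring

theorem integrable_exp_pow_div_exp_add_pow (n : ℕ) (ha : 0 < a.re) :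
    Integrable fun t : ℝ => (Real.exp t : ℂ) ^ (n + 1) / ((Real.exp t : ℂ) + a) ^ (2 * n + 2) := by
  have hcont : Continuous fun t : ℝ =>
      (Real.exp t : ℂ) ^ (n + 1) / ((Real.exp t : ℂ) + a) ^ (2 * n + 2) :=
    by fun_prop (disch := exact fun t => pow_ne_zero _ (exp_add_ne_zero ha t))
  have hnorm (t : ℝ) : ‖(Real.exp t : ℂ) ^ (n + 1) / ((Real.exp t : ℂ) + a) ^ (2 * n + 2)‖ ≤
      Real.exp t ^ (n + 1) / (Real.exp t + a.re) ^ (2 * n + 2) := by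
    rw [norm_div, norm_pow, norm_pow, norm_real, Real.norm_of_nonneg (Real.exp_pos t).le]
    have := Real.exp_pos t
    gcongr
    exact exp_add_re_le_norm_exp_add t
  have hn : (0 : ℝ) < n + 1 := n.cast_add_one_pos
  rw [← integrableOn_univ, ← Iic_union_Ioi (a := 0)]
  refine IntegrableOn.union ?_ ?_
  · refine ((integrableOn_exp_mul_Iic hn 0).div_const (a.re ^ (2 * n + 2))).mono'
      hcont.aestronglyMeasurable.restrict (ae_of_all _ fun t => (hnorm t).trans ?_)
    rw [← Nat.cast_succ, Real.exp_nat_mul]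
    have := Real.exp_pos t
    gcongr
    linarith
  · refine (exp_neg_integrableOn_Ioi 0 hn).mono' hcont.aestronglyMeasurable.restrict
      (ae_of_all _ fun t => (hnorm t).trans ?_)
    have := Real.exp_pos t
    calc Real.exp t ^ (n + 1) / (Real.exp t + a.re) ^ (2 * n + 2)
        ≤ Real.exp t ^ (n + 1) / Real.exp t ^ (2 * n + 2) := by gcongr; linarith
      _ = Real.exp (-(n + 1) * t) := by
        rw [neg_mul, Real.exp_neg, ← Nat.cast_succ, Real.exp_nat_mul]
        field_simp
        ring

theorem integral_exp_pow_div_exp_add_pow (n : ℕ) (ha : 0 < a.re) :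
    ∫ t : ℝ, (Real.exp t : ℂ) ^ (n + 1) / ((Real.exp t : ℂ) + a) ^ (2 * n + 2) =
      (n ! : ℂ) ^ 2 / (2 * n + 1)! / a ^ (n + 1) := by
  have hP : Continuous (betaPrimitive n) :=
    continuous_iff_continuousAt.mpr fun s => (hasDerivAt_betaPrimitive n s).continuousAt
  have hbot := ((hP.tendsto 0).comp
    (tendsto_exp_div_exp_add_atBot (ne_zero_of_re_pos ha))).div_const (a ^ (n + 1))
  have htop := ((hP.tendsto 1).comp
    (tendsto_exp_div_exp_add_atTop (a := a))).div_const (a ^ (n + 1))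
  rw [integral_of_hasDerivAt_of_tendsto (hasDerivAt_betaPrimitive_exp_div n ha)
    (integrable_exp_pow_div_exp_add_pow n ha) hbot htop, betaPrimitive_zero, betaPrimitive_one,
    zero_div, sub_zero]

end ExpSubstitution

/-- integral of the weight-`2k` coherent states along the horizontal
lift of the geodesic `ξ(t) = ie^t`:
`∫ℝ e^{kt}(z + ie^t)^{−2k} dt = (−i)^k ((k−1)!)²/(2k−1)! · z^{−k}`. -/
theorem stmt10 (k : ℕ) (hk : 1 ≤ k) (z : ℂ) (hz : 0 < z.im) :
    ∫ t : ℝ, (Real.exp (k * t) : ℂ) *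
        (z + Complex.I * Real.exp t) ^ (-(2 * (k : ℤ))) =
      (-Complex.I) ^ k * ((Nat.factorial (k - 1) : ℂ)) ^ 2 /
        (Nat.factorial (2 * k - 1) : ℂ) * z ^ (-(k : ℤ)) := by
  obtain ⟨n, rfl⟩ : ∃ n, k = n + 1 := ⟨k - 1, by omega⟩
  have ha : 0 < (-I * z).re := by simpa using hz
  have hintegrand (t : ℝ) : (Real.exp ((n + 1 : ℕ) * t) : ℂ) *
      (z + I * Real.exp t) ^ (-(2 * ((n + 1 : ℕ) : ℤ))) =
      (-1) ^ (n + 1) *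
        ((Real.exp t : ℂ) ^ (n + 1) / ((Real.exp t : ℂ) + -I * z) ^ (2 * n + 2)) := by
    rw [Real.exp_nat_mul, show z + I * Real.exp t = I * (Real.exp t + -I * z) by ring_nf; simp,
      zpow_neg, zpow_mul, zpow_ofNat, zpow_natCast, mul_pow, I_sq, mul_pow, ← pow_mul, mul_inv,
      ← inv_pow, inv_neg, inv_one, ofReal_pow, div_eq_mul_inv]
    ring
  simp_rw [hintegrand, integral_const_mul, integral_exp_pow_div_exp_add_pow n ha]
  rw [show 2 * (n + 1) - 1 = 2 * n + 1 by omega, Nat.add_sub_cancel, zpow_neg, zpow_natCast]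
  have hz0 : z ≠ 0 := by rintro rfl; simp at hz
  rw [show (-1 : ℂ) ^ (n + 1) = (-I) ^ (n + 1) * (-I) ^ (n + 1) by rw [← mul_pow]; simp, mul_pow]
  field_simp
end

section
/- Let k ≥ 1 be an integer, λ > 0 a real number, and z ∈ ℂ with Im z > 0. Then ∫_{−∞}^{∞} e^{ikt/λ} · (z + iλ − t)^{−2k} dt = (2π·(−1)^k / (2k−1)!) · (k/λ)^{2k−1} · e^{−k} · e^{ikz/λ}. -/
/-!
For `Im c > 0` put `b = -i c`, so `Re b > 0`, and let `f(u) = u^m e^{-bu}` for `u > 0`, `f = 0`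
otherwise. Its Fourier transform is `m! / (b + 2πiw)^{m+1} = m! / ((-i)^{m+1} (c - 2πw)^{m+1})`,
which is integrable once `m ≥ 1`. Fourier inversion at `v > 0` then evaluates
`∫ e^{ivs} (c - s)^{-(m+1)} ds = 2π (-i)^{m+1} v^m e^{icv} / m!`. The theorem is the case
`m + 1 = 2k`, `c = z + iλ`, `v = k/λ`, where `e^{icv} = e^{-k} e^{ikz/λ}`.
-/

open MeasureTheory Real Set Filter Complex
open scoped Topology FourierTransform Nat

section GammaIntegral

variable {b : ℂ}

lemma norm_pow_mul_cexp_neg_mul {u : ℝ} (hu : 0 ≤ u) (n : ℕ) :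
    ‖(u : ℂ) ^ n * cexp (-(b * u))‖ = u ^ n * Real.exp (-(b.re * u)) := by
  simp [norm_exp, abs_of_nonneg hu]

lemma integrableOn_pow_mul_cexp_neg_mul_Ioi (hb : 0 < b.re) (n : ℕ) :
    IntegrableOn (fun u : ℝ => (u : ℂ) ^ n * cexp (-(b * u))) (Ioi 0) := by
  have hmaj := integrableOn_rpow_mul_exp_neg_mul_rpow (s := n) (p := 1)
    (by linarith [n.cast_nonneg (α := ℝ)]) one_pos hb
  refine hmaj.mono' (by fun_prop) ?_
  filter_upwards [ae_restrict_mem measurableSet_Ioi] with u hu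
  rw [norm_pow_mul_cexp_neg_mul (le_of_lt hu), rpow_one, rpow_natCast, neg_mul]

lemma tendsto_pow_mul_cexp_neg_mul_atTop (hb : 0 < b.re) (n : ℕ) :
    Tendsto (fun u : ℝ => (u : ℂ) ^ n * cexp (-(b * u))) atTop (𝓝 0) := by
  refine tendsto_zero_iff_norm_tendsto_zero.mpr ?_
  have h := (isLittleO_pow_exp_pos_mul_atTop n hb).tendsto_div_nhds_zero
  refine h.congr' ?_
  filter_upwards [eventually_ge_atTop 0] with u hu
  rw [norm_pow_mul_cexp_neg_mul hu, Real.exp_neg, div_eq_mul_inv]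

lemma hasDerivAt_cexp_neg_mul (u : ℝ) :
    HasDerivAt (fun u : ℝ => cexp (-(b * u))) (-b * cexp (-(b * u))) u := by
  simpa [mul_comm] using ((hasDerivAt_id u).ofReal_comp.const_mul b).neg.cexp

lemma mul_integral_cexp_neg_mul_Ioi (hb : 0 < b.re) :
    b * ∫ u in Ioi (0 : ℝ), cexp (-(b * u)) = 1 := by
  have h := integral_Ioi_of_hasDerivAt_of_tendsto'
    (fun u _ => (hasDerivAt_cexp_neg_mul (b := b) u).congr_deriv (by rw [pow_zero, one_mul]))
    ((integrableOn_pow_mul_cexp_neg_mul_Ioi hb 0).const_mul (-b)) (by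
      simpa using tendsto_pow_mul_cexp_neg_mul_atTop hb 0)
  rw [integral_const_mul] at h
  simpa using congrArg Neg.neg h

lemma mul_integral_pow_succ_mul_cexp_neg_mul_Ioi (hb : 0 < b.re) (n : ℕ) :
    b * ∫ u in Ioi (0 : ℝ), (u : ℂ) ^ (n + 1) * cexp (-(b * u)) =
      (n + 1) * ∫ u in Ioi (0 : ℝ), (u : ℂ) ^ n * cexp (-(b * u)) := by
  have hderiv (u : ℝ) : HasDerivAt (fun u : ℝ => (u : ℂ) ^ (n + 1) * cexp (-(b * u)))
      ((n + 1) * ((u : ℂ) ^ n * cexp (-(b * u))) -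
        b * ((u : ℂ) ^ (n + 1) * cexp (-(b * u)))) u := by
    refine (((hasDerivAt_pow (n + 1) (u : ℂ)).comp_ofReal).mul
      (hasDerivAt_cexp_neg_mul u)).congr_deriv ?_
    push_cast
    ring
  have h := integral_Ioi_of_hasDerivAt_of_tendsto' (fun u _ => hderiv u)
    (((integrableOn_pow_mul_cexp_neg_mul_Ioi hb n).const_mul _).sub
      ((integrableOn_pow_mul_cexp_neg_mul_Ioi hb (n + 1)).const_mul _))
    (tendsto_pow_mul_cexp_neg_mul_atTop hb (n + 1))
  rw [integral_sub ((integrableOn_pow_mul_cexp_neg_mul_Ioi hb n).const_mul _)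
    ((integrableOn_pow_mul_cexp_neg_mul_Ioi hb (n + 1)).const_mul _), integral_const_mul,
    integral_const_mul] at h
  rw [ofReal_zero, zero_pow n.succ_ne_zero, zero_mul, sub_zero] at h
  exact (sub_eq_zero.mp h).symm

theorem integral_pow_mul_cexp_neg_mul_Ioi (hb : 0 < b.re) (n : ℕ) :
    ∫ u in Ioi (0 : ℝ), (u : ℂ) ^ n * cexp (-(b * u)) = n ! / b ^ (n + 1) := by
  have hb0 : b ≠ 0 := fun h => by simp [h] at hb
  induction n with
  | zero =>
    rw [eq_div_iff (by simpa using hb0), mul_comm]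
    simpa using mul_integral_cexp_neg_mul_Ioi hb
  | succ n ih =>
    rw [eq_div_iff (pow_ne_zero _ hb0), pow_succ', ← mul_assoc, mul_comm _ b,
      mul_integral_pow_succ_mul_cexp_neg_mul_Ioi hb, ih, Nat.factorial_succ]
    field_simp
    push_cast
    ring

end GammaIntegral

section Integrability

variable {c : ℂ}

lemma normSq_sub_ofReal (hc : c.im ≠ 0) (s : ℝ) :
    normSq (c - s) = c.im ^ 2 * (1 + ((s - c.re) / c.im) ^ 2) := by
  rw [normSq_apply]
  field_simp
  simp
  ring

lemma integrable_inv_normSq_sub_ofReal (hc : c.im ≠ 0) :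
    Integrable fun s : ℝ => (normSq (c - s))⁻¹ := by
  have h := ((integrable_inv_one_add_sq.comp_div hc).comp_sub_right c.re).const_mul (c.im ^ 2)⁻¹
  refine h.congr (Eventually.of_forall fun s => ?_)
  simp only [normSq_sub_ofReal hc, mul_inv]

theorem integrable_inv_sub_ofReal_pow (hc : c.im ≠ 0) {n : ℕ} (hn : 2 ≤ n) :
    Integrable fun s : ℝ => ((c - s) ^ n)⁻¹ := by
  obtain ⟨m, rfl⟩ := Nat.exists_eq_add_of_le' hn
  refine ((integrable_inv_normSq_sub_ofReal hc).const_mul (|c.im| ^ m)⁻¹).mono'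
    (by fun_prop) (Eventually.of_forall fun s => ?_)
  have him : |c.im| ≤ ‖c - s‖ := by simpa using abs_im_le_norm (c - s)
  rw [norm_inv, norm_pow, pow_add, ← Complex.sq_norm, ← mul_inv]
  have him0 : 0 < |c.im| := abs_pos.mpr hc
  gcongr
  exact mul_pos (pow_pos him0 m) (pow_pos (him0.trans_le him) 2)

end Integrability

theorem fourier_indicator_pow_mul_cexp_neg_mul {b : ℂ} (hb : 0 < b.re) (n : ℕ) (w : ℝ) :
    𝓕 ((Ioi 0).indicator fun u : ℝ => (u : ℂ) ^ n * cexp (-(b * u))) w =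
      n ! / (b + 2 * π * w * I) ^ (n + 1) := by
  have hb' : 0 < (b + 2 * π * w * I).re := by simpa using hb
  rw [fourier_real_eq_integral_exp_smul, ← integral_pow_mul_cexp_neg_mul_Ioi hb' n,
    ← integral_indicator measurableSet_Ioi]
  congr 1 with u
  by_cases hu : u ∈ Ioi 0
  · simp only [indicator_of_mem hu, smul_eq_mul]
    rw [mul_left_comm, ← Complex.exp_add]
    push_cast
    ring_nf
  · simp [indicator_of_notMem hu]

theorem fourier_indicator_pow_mul_cexp_I_mul {c : ℂ} (hc : 0 < c.im) (m : ℕ) :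
    𝓕 ((Ioi 0).indicator fun u : ℝ => (u : ℂ) ^ m * cexp (-(-I * c * u))) =
      fun w => m ! / (-I) ^ (m + 1) * ((c - (2 * π * w : ℝ)) ^ (m + 1))⁻¹ := by
  ext w
  rw [fourier_indicator_pow_mul_cexp_neg_mul (by simpa using hc),
    show -I * c + 2 * π * w * I = -I * (c - (2 * π * w : ℝ)) by push_cast; ring,
    mul_pow, ← div_div, div_eq_mul_inv _ (_ ^ _)]

theorem integral_cexp_mul_inv_sub_ofReal_pow {c : ℂ} (hc : 0 < c.im) {m : ℕ} (hm : 1 ≤ m)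
    {v : ℝ} (hv : 0 < v) :
    ∫ s : ℝ, cexp (I * v * s) * ((c - s) ^ (m + 1))⁻¹ =
      2 * π * (-I) ^ (m + 1) / m ! * v ^ m * cexp (I * c * v) := by
  set f : ℝ → ℂ := (Ioi 0).indicator fun u : ℝ => (u : ℂ) ^ m * cexp (-(-I * c * u))
  set g : ℝ → ℂ := fun s => cexp (I * v * s) * ((c - s) ^ (m + 1))⁻¹
  have hb : 0 < (-I * c).re := by simpa using hc
  have hFf := fourier_indicator_pow_mul_cexp_I_mul hc m
  have hf : Integrable f :=
    (integrable_indicator_iff measurableSet_Ioi).mpr (integrableOn_pow_mul_cexp_neg_mul_Ioi hb m)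
  have hFf_int : Integrable (𝓕 f) := by
    rw [hFf]
    exact ((integrable_inv_sub_ofReal_pow hc.ne' (by omega)).comp_mul_left'
      (by positivity)).const_mul _
  have hf_cont : ContinuousAt f v := by
    refine ((by fun_prop : Continuous fun u : ℝ => (u : ℂ) ^ m * cexp (-(-I * c * u)))
      ).continuousAt.congr ?_
    filter_upwards [Ioi_mem_nhds hv] with u hu
    simp only [f, indicator_of_mem hu]
  have hinv := hf.fourierInv_fourier_eq hFf_int hf_cont
  rw [fourierInv_eq_fourier_neg, fourier_real_eq_integral_exp_smul] at hinv
  have hscale : ∫ w : ℝ, cexp ((-2 * π * w * -v : ℝ) * I) • 𝓕 f w =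
      m ! / (-I) ^ (m + 1) * ∫ w : ℝ, g (2 * π * w) := by
    rw [← integral_const_mul]
    congr 1 with w
    rw [hFf, smul_eq_mul]
    simp only [g]
    push_cast
    ring_nf
  simp only [f, indicator_of_mem (mem_Ioi.mpr hv)] at hinv
  rw [hscale, Measure.integral_comp_mul_left, abs_of_pos (by positivity), real_smul,
    show -(-I * c * v) = I * c * v by ring] at hinv
  have hfac : (m ! : ℂ) ≠ 0 := by exact_mod_cast m.factorial_ne_zero
  push_cast at hinv
  rw [mul_assoc _ _ (cexp _), ← hinv]
  field_simp

/-- integral of the weight-`2k` coherent states along the horizontal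
lift of the horocycle `γ(t) = iλ + t`:
`∫ℝ e^{ikt/λ}(z + iλ − t)^{−2k} dt = (2π(−1)^k/(2k−1)!) (k/λ)^{2k−1} e^{−k} e^{ikz/λ}`. -/
theorem stmt12 (k : ℕ) (hk : 1 ≤ k) (lam : ℝ) (hlam : 0 < lam) (z : ℂ) (hz : 0 < z.im) :
    ∫ t : ℝ, Complex.exp (Complex.I * k * t / lam) *
        (z + Complex.I * lam - t) ^ (-(2 * (k : ℤ))) =
      ((2 * Real.pi * (-1 : ℝ) ^ k / (Nat.factorial (2 * k - 1)) : ℝ) : ℂ) *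
        (((k : ℝ) / lam : ℝ) : ℂ) ^ (2 * k - 1) *
        (Real.exp (-(k : ℝ)) : ℂ) * Complex.exp (Complex.I * k * z / lam) := by
  have hc : 0 < (z + I * lam).im := by simpa using add_pos hz hlam
  have hv : 0 < (k : ℝ) / lam := div_pos (by exact_mod_cast hk) hlam
  have key := integral_cexp_mul_inv_sub_ofReal_pow hc (m := 2 * k - 1) (by omega) hv
  rw [show 2 * k - 1 + 1 = 2 * k by omega] at key
  convert key using 1
  · congr 1 with t
    rw [zpow_neg, show (2 * (k : ℤ)) = ((2 * k : ℕ) : ℤ) by push_cast; ring, zpow_natCast]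
    push_cast
    ring_nf
  · have hexp : I * (z + I * lam) * ((k / lam : ℝ) : ℂ) = -k + I * k * z / lam := by
      have hlam0 : (lam : ℂ) ≠ 0 := ofReal_ne_zero.mpr hlam.ne'
      push_cast
      field_simp
      linear_combination (k * lam : ℂ) * I_sq
    rw [pow_mul, neg_sq, I_sq, hexp, Complex.exp_add, ofReal_exp]
    push_cast
    ring
end

section
/- Let k ≥ 1 and m ≥ 2k − 1 be integers and let a, b ∈ ℂ with |b| < |a|. Then the contour integral over the unit circle satisfies ∮_{|u|=1} u^m · (a·u + b)^{−2k} du = 2πi · C(m, 2k−1) · (−b)^{m−2k+1} · a^{−(m+1)}, where C(m, 2k−1) is the binomial coefficient. -/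
/-!
Write `a u + b = a (u - w)` with `w = -b/a`, which lies inside the unit circle. Expanding
`u ^ m = ((u - w) + w) ^ m` binomially turns the integrand into a finite sum of powers
`(u - w) ^ j`, `j ∈ ℤ`; on a circle around `w` all of them integrate to `0` except `(u - w)⁻¹`,
whose integral is `2πi`. Only the term with `j = 2k - 1` of the expansion survives.
-/

open Complex Metric Real

theorem circleIntegral_sub_zpow_of_mem_ball {c w : ℂ} {R : ℝ} (hw : w ∈ ball c R) (n : ℤ) :
    (∮ z in C(c, R), (z - w) ^ n) = if n = -1 then 2 * π * I else 0 := by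
  split_ifs with hn
  · simpa [hn] using circleIntegral.integral_sub_inv_of_mem_ball hw
  · exact circleIntegral.integral_sub_zpow_of_ne hn c w R

theorem circleIntegral_pow_mul_sub_zpow_neg {c w : ℂ} {R : ℝ} (hw : w ∈ ball c R) (m n : ℕ) :
    (∮ z in C(c, R), z ^ m * (z - w) ^ (-((n : ℤ) + 1))) =
      2 * π * I * m.choose n * w ^ (m - n) := by
  have hR : 0 < R := dist_nonneg.trans_lt hw
  have hw' : w ∉ sphere c R := fun h => (mem_ball.1 hw).ne (mem_sphere.1 h)
  have expand : Set.EqOn (fun z => z ^ m * (z - w) ^ (-((n : ℤ) + 1)))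
      (fun z => ∑ j ∈ Finset.range (m + 1),
        (m.choose j * w ^ (m - j) : ℂ) * (z - w) ^ ((j : ℤ) - (n + 1)))
      (sphere c R) := by
    intro z hz
    have hzw : z - w ≠ 0 := sub_ne_zero.2 (ne_of_mem_of_not_mem hz hw')
    simp only
    rw [← sub_add_cancel z w, add_pow, Finset.sum_mul]
    refine Finset.sum_congr rfl fun j _ => ?_
    rw [sub_add_cancel, sub_eq_add_neg (j : ℤ), zpow_add₀ hzw, zpow_natCast]
    ring
  have integrable (j : ℕ) : CircleIntegrable
      (fun z => (m.choose j * w ^ (m - j) : ℂ) * (z - w) ^ ((j : ℤ) - (n + 1))) c R := by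
    refine CircleIntegrable.const_smul (circleIntegrable_sub_zpow_iff.2 ?_)
    rw [abs_of_pos hR]
    exact Or.inr (Or.inr hw')
  rw [circleIntegral.integral_congr hR.le expand,
    circleIntegral.integral_fun_sum fun j _ => integrable j]
  simp only [circleIntegral.integral_const_mul, circleIntegral_sub_zpow_of_mem_ball hw,
    show ∀ j : ℕ, (j : ℤ) - (n + 1) = -1 ↔ j = n by omega, mul_ite, mul_zero,
    Finset.sum_ite_eq', Finset.mem_range]
  split_ifs with hnm
  · ring
  · simp [Nat.choose_eq_zero_of_lt (by omega : m < n)]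

theorem stmt13_general (k m : ℕ) (hk : 1 ≤ k) (a b : ℂ)
    (hab : ‖b‖ < ‖a‖) :
    circleIntegral (fun u : ℂ => u ^ m * (a * u + b) ^ (-(2 * (k : ℤ)))) 0 1 =
      2 * (Real.pi : ℂ) * Complex.I * (Nat.choose m (2 * k - 1) : ℂ) *
        (-b) ^ (m - (2 * k - 1)) * a ^ (-((m : ℤ) + 1)) := by
  have ha : a ≠ 0 := norm_pos_iff.1 ((norm_nonneg b).trans_lt hab)
  have hpole : -b / a ∈ ball (0 : ℂ) 1 := by
    rwa [mem_ball_zero_iff, norm_div, norm_neg, div_lt_one (norm_pos_iff.2 ha)]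
  have factor (u : ℂ) : u ^ m * (a * u + b) ^ (-(2 * (k : ℤ))) =
      a ^ (-(2 * (k : ℤ))) * (u ^ m * (u - -b / a) ^ (-(((2 * k - 1 : ℕ) : ℤ) + 1))) := by
    rw [show -(((2 * k - 1 : ℕ) : ℤ) + 1) = -(2 * (k : ℤ)) by omega,
      show a * u + b = a * (u - -b / a) by field_simp; ring, mul_zpow]
    ring
  simp_rw [factor]
  rw [circleIntegral.integral_const_mul, circleIntegral_pow_mul_sub_zpow_neg hpole]
  rcases lt_or_ge m (2 * k - 1) with hm | hm
  · simp [Nat.choose_eq_zero_of_lt hm]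
  · rw [div_pow, show -((m : ℤ) + 1) = -(2 * (k : ℤ)) - ((m - (2 * k - 1) : ℕ) : ℤ) by omega,
      zpow_sub₀ ha, zpow_natCast]
    field_simp

/-- residue computation for the circle states: for `k ≥ 1`,
`m ≥ 2k−1` and `|b| < |a|`,
`∮_{|u|=1} u^m (au+b)^{−2k} du = 2πi C(m,2k−1) (−b)^{m−2k+1} a^{−(m+1)}`. -/
theorem stmt13 (k m : ℕ) (hk : 1 ≤ k) (hm : 2 * k - 1 ≤ m) (a b : ℂ)
    (hab : ‖b‖ < ‖a‖) :
    circleIntegral (fun u : ℂ => u ^ m * (a * u + b) ^ (-(2 * (k : ℤ)))) 0 1 =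
      2 * (Real.pi : ℂ) * Complex.I * (Nat.choose m (2 * k - 1) : ℂ) *
        (-b) ^ (m - (2 * k - 1)) * a ^ (-((m : ℤ) + 1)) :=
  stmt13_general k m hk a b hab
end

section
/- Let τ ∈ ℝ and define g : ℝ → Matrix(2,2,ℝ) by g(t) = [[e^{t/2}, τ·e^{t/2}],[0, e^{−t/2}]] · [[cos(tτ/2), −sin(tτ/2)],[sin(tτ/2), cos(tτ/2)]]. Then for every t ∈ ℝ: (a) det g(t) = 1; (b) the matrix g(t)⁻¹ · g'(t) (where g' is the entrywise derivative) is symmetric and has trace 0; and (c) writing g(t) = [[a,b],[c,d]], one has (a·i + b)/(c·i + d) = e^t(τ + i) and (c·i + d)^{−2} = e^{t(1 − iτ)}. -/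
/-!
Write `g(t) = A(t) R(tτ/2)` with `A(t) = [[e^{t/2}, τe^{t/2}], [0, e^{-t/2}]]` and `R(θ)` the
rotation by `θ`. Then `A' = A P` with `P = [[1/2, τ], [0, -1/2]]` and `R' = R (τ/2) J` with `J` the
quarter turn, which commutes with `R`. Hence `g⁻¹g' = Rᵀ (P + (τ/2) J) R = Rᵀ S R` for the constant
symmetric traceless `S = [[1/2, τ/2], [τ/2, -1/2]]`, and conjugating by the orthogonal `R` keeps
both properties. For the action on `i`: `(i, 1)` is an eigenvector of every `R(θ)`, with eigenvalue
`e^{iθ}`, so `g(t) (i, 1) = e^{iθ} A(t) (i, 1) = e^{iθ} (e^{t/2}(τ + i), e^{-t/2})`.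
-/

open Matrix

section EntrywiseDeriv

variable {𝕜 : Type*} [NontriviallyNormedField 𝕜] {m n p : Type*}

def HasEntrywiseDerivAt (A : 𝕜 → Matrix m n 𝕜) (A' : Matrix m n 𝕜) (t : 𝕜) : Prop :=
  ∀ i j, HasDerivAt (fun s => A s i j) (A' i j) t

namespace HasEntrywiseDerivAt

variable {A : 𝕜 → Matrix m n 𝕜} {A' : Matrix m n 𝕜} {t : 𝕜}

theorem of_deriv_eq (h : HasEntrywiseDerivAt A A' t) :
    (Matrix.of fun i j => deriv (fun s => A s i j) t) = A' :=
  Matrix.ext fun i j => (h i j).deriv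

theorem mul [Fintype n] {B : 𝕜 → Matrix n p 𝕜} {B' : Matrix n p 𝕜}
    (hA : HasEntrywiseDerivAt A A' t) (hB : HasEntrywiseDerivAt B B' t) :
    HasEntrywiseDerivAt (fun s => A s * B s) (A' * B t + A t * B') t := by
  intro i j
  simp only [mul_apply, Matrix.add_apply, ← Finset.sum_add_distrib]
  exact HasDerivAt.fun_sum fun k _ => (hA i k).mul (hB k j)

end HasEntrywiseDerivAt

end EntrywiseDeriv

theorem Matrix.IsSymm.transpose_mul_mul {n α : Type*} [Fintype n] [CommSemiring α]
    {S : Matrix n n α} (hS : S.IsSymm) (R : Matrix n n α) : (Rᵀ * S * R).IsSymm := by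
  simp only [IsSymm, transpose_mul, transpose_transpose, hS.eq, Matrix.mul_assoc]

theorem Matrix.trace_transpose_mul_mul_of_orthogonal {n α : Type*} [Fintype n] [DecidableEq n]
    [CommRing α] {R : Matrix n n α} (hR : Rᵀ * R = 1) (S : Matrix n n α) :
    (Rᵀ * S * R).trace = S.trace := by
  rw [trace_mul_cycle, mul_eq_one_comm.mp hR, Matrix.one_mul]

/-- `(A R)⁻¹ (A R)'` for `A' = A P` and `R' = R X`, when `R` is orthogonal and commutes with `X`. -/
theorem Matrix.inv_mul_product_rule_eq_conj {n α : Type*} [Fintype n] [DecidableEq n] [CommRing α]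
    {A R P X : Matrix n n α} (hA : IsUnit A.det) (hR : Rᵀ * R = 1) (hRX : R * X = X * R) :
    (A * R)⁻¹ * (A * P * R + A * R * X) = Rᵀ * (P + X) * R := by
  rw [Matrix.mul_inv_rev, inv_eq_left_inv hR, Matrix.mul_add, Matrix.mul_add, Matrix.add_mul]
  simp only [Matrix.mul_assoc, nonsing_inv_mul_cancel_left _ _ hA, hRX]

namespace HypercycleLift

open Real

noncomputable def shearDilation (τ t : ℝ) : Matrix (Fin 2) (Fin 2) ℝ :=
  !![exp (t / 2), τ * exp (t / 2); 0, exp (-t / 2)]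

noncomputable def rotationMatrix (θ : ℝ) : Matrix (Fin 2) (Fin 2) ℝ :=
  !![cos θ, -sin θ; sin θ, cos θ]

def quarterTurn : Matrix (Fin 2) (Fin 2) ℝ := !![0, -1; 1, 0]

theorem det_shearDilation (τ t : ℝ) : (shearDilation τ t).det = 1 := by
  rw [shearDilation, det_fin_two_of, ← exp_add]
  simp [neg_div]

theorem det_rotationMatrix (θ : ℝ) : (rotationMatrix θ).det = 1 := by
  rw [rotationMatrix, det_fin_two_of]
  linear_combination cos_sq_add_sin_sq θ

theorem transpose_rotationMatrix_mul_self (θ : ℝ) :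
    (rotationMatrix θ)ᵀ * rotationMatrix θ = 1 := by
  ext i j
  fin_cases i <;> fin_cases j <;> simp [rotationMatrix, mul_apply, Fin.sum_univ_two] <;> ring_nf <;>
    simp [cos_sq_add_sin_sq, sin_sq_add_cos_sq]

theorem commute_rotationMatrix_quarterTurn (θ : ℝ) : Commute (rotationMatrix θ) quarterTurn := by
  ext i j
  fin_cases i <;> fin_cases j <;> simp [rotationMatrix, quarterTurn, mul_apply, Fin.sum_univ_two]

theorem hasEntrywiseDerivAt_shearDilation (τ t : ℝ) :
    HasEntrywiseDerivAt (shearDilation τ) (shearDilation τ t * !![1 / 2, τ; 0, -1 / 2]) t := by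
  have hE : HasDerivAt (fun s => exp (s / 2)) (exp (t / 2) * (1 / 2)) t :=
    ((hasDerivAt_id t).div_const 2).exp
  have hF : HasDerivAt (fun s => exp (-s / 2)) (exp (-t / 2) * (-1 / 2)) t :=
    ((hasDerivAt_neg t).div_const 2).exp
  intro i j
  fin_cases i <;> fin_cases j <;> simp only [shearDilation, mul_apply, Fin.sum_univ_two] <;> simp
  · exact hE.congr_deriv (by ring)
  · exact (hE.const_mul τ).congr_deriv (by ring)
  · exact hasDerivAt_const t 0
  · exact hF

theorem hasEntrywiseDerivAt_rotationMatrix (ω t : ℝ) :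
    HasEntrywiseDerivAt (fun s => rotationMatrix (s * ω))
      (rotationMatrix (t * ω) * (ω • quarterTurn)) t := by
  have hθ : HasDerivAt (fun s => s * ω) ω t := by simpa using (hasDerivAt_id t).mul_const ω
  intro i j
  fin_cases i <;> fin_cases j <;> simp [rotationMatrix, quarterTurn, mul_apply, Fin.sum_univ_two]
  · exact hθ.cos.congr_deriv (by ring)
  · exact hθ.sin.neg.congr_deriv (by ring)
  · exact hθ.sin
  · exact hθ.cos.congr_deriv (by ring)

theorem shear_generator_add_smul_quarterTurn (τ : ℝ) :
    !![1 / 2, τ; 0, -1 / 2] + (τ / 2) • quarterTurn = !![1 / 2, τ / 2; τ / 2, -1 / 2] := by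
  ext i j
  fin_cases i <;> fin_cases j <;> simp [quarterTurn]
  ring

theorem inv_mul_entrywiseDeriv (τ t : ℝ) :
    (shearDilation τ t * rotationMatrix (t * (τ / 2)))⁻¹ *
        (Matrix.of fun i j =>
          deriv (fun s => (shearDilation τ s * rotationMatrix (s * (τ / 2))) i j) t) =
      (rotationMatrix (t * (τ / 2)))ᵀ * !![1 / 2, τ / 2; τ / 2, -1 / 2] *
        rotationMatrix (t * (τ / 2)) := by
  rw [((hasEntrywiseDerivAt_shearDilation τ t).mul
      (hasEntrywiseDerivAt_rotationMatrix _ t)).of_deriv_eq,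
    ← Matrix.mul_assoc, inv_mul_product_rule_eq_conj (by simp [det_shearDilation])
      (transpose_rotationMatrix_mul_self _)
      ((commute_rotationMatrix_quarterTurn _).smul_right _).eq,
    shear_generator_add_smul_quarterTurn]

open Complex

theorem map_ofReal_mulVec_I_one (M : Matrix (Fin 2) (Fin 2) ℝ) :
    M.map ofReal *ᵥ ![I, 1] = ![M 0 0 * I + M 0 1, M 1 0 * I + M 1 1] := by
  ext i
  fin_cases i <;> simp [mulVec, dotProduct, Fin.sum_univ_two]

theorem rotationMatrix_mulVec_I_one (θ : ℝ) :
    (rotationMatrix θ).map ofReal *ᵥ ![I, 1] = cexp (θ * I) • ![I, 1] := by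
  rw [map_ofReal_mulVec_I_one, exp_mul_I]
  ext i
  fin_cases i <;> simp [rotationMatrix]
  · linear_combination -Complex.sin θ * I_sq
  · ring

theorem shearDilation_mulVec_I_one (τ t : ℝ) :
    (shearDilation τ t).map ofReal *ᵥ ![I, 1] = ![cexp (t / 2) * (τ + I), cexp (-t / 2)] := by
  rw [map_ofReal_mulVec_I_one]
  ext i
  fin_cases i <;> simp [shearDilation]
  ring

theorem shearDilation_mul_rotationMatrix_mulVec_I_one (τ t θ : ℝ) :
    (shearDilation τ t * rotationMatrix θ).map ofReal *ᵥ ![I, 1] =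
      ![cexp (t / 2 + θ * I) * (τ + I), cexp (-t / 2 + θ * I)] := by
  rw [show (shearDilation τ t * rotationMatrix θ).map ofReal =
      (shearDilation τ t).map ofReal * (rotationMatrix θ).map ofReal from
        Matrix.map_mul (f := ofRealHom),
    ← mulVec_mulVec, rotationMatrix_mulVec_I_one, mulVec_smul, shearDilation_mulVec_I_one]
  ext i
  fin_cases i <;> simp [Complex.exp_add] <;> ring

theorem numerator_and_denominator_at_I (τ t θ : ℝ) :
    ((shearDilation τ t * rotationMatrix θ) 0 0 * I +
        (shearDilation τ t * rotationMatrix θ) 0 1 : ℂ) = cexp (t / 2 + θ * I) * (τ + I) ∧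
      ((shearDilation τ t * rotationMatrix θ) 1 0 * I +
        (shearDilation τ t * rotationMatrix θ) 1 1 : ℂ) = cexp (-t / 2 + θ * I) := by
  simpa only [map_ofReal_mulVec_I_one, vecCons_inj, and_true] using
    shearDilation_mul_rotationMatrix_mulVec_I_one τ t θ

theorem moebius_apply_I (τ t θ : ℝ) :
    ((shearDilation τ t * rotationMatrix θ) 0 0 * I +
        (shearDilation τ t * rotationMatrix θ) 0 1 : ℂ) /
        ((shearDilation τ t * rotationMatrix θ) 1 0 * I +
          (shearDilation τ t * rotationMatrix θ) 1 1) =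
      Real.exp t * (τ + I) := by
  obtain ⟨hnum, hden⟩ := numerator_and_denominator_at_I τ t θ
  rw [hnum, hden, div_eq_iff (Complex.exp_ne_zero _), ofReal_exp, mul_right_comm (cexp t),
    ← Complex.exp_add]
  congr 2
  ring

theorem denominator_at_I_zpow_neg_two (τ t θ : ℝ) :
    ((shearDilation τ t * rotationMatrix θ) 1 0 * I +
        (shearDilation τ t * rotationMatrix θ) 1 1 : ℂ) ^ (-2 : ℤ) = cexp (t - 2 * θ * I) := by
  rw [(numerator_and_denominator_at_I τ t θ).2, ← exp_int_mul]
  congr 1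
  push_cast
  ring

end HypercycleLift

open HypercycleLift in
/-- the curve
`g(t) = [[e^{t/2}, τe^{t/2}],[0, e^{−t/2}]]·[[cos(tτ/2), −sin(tτ/2)],[sin(tτ/2), cos(tτ/2)]]`
has `det g(t) = 1`, `g(t)⁻¹g'(t)` symmetric and traceless (horizontality), and
`g(t)·(i,1) = (e^t(τ+i), e^{t(1−iτ)})` under the fractional-linear action. -/
theorem stmt14 (τ : ℝ) (g : ℝ → Matrix (Fin 2) (Fin 2) ℝ)
    (hg : ∀ t : ℝ, g t =
      !![Real.exp (t / 2), τ * Real.exp (t / 2); 0, Real.exp (-t / 2)] *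
      !![Real.cos (t * τ / 2), -Real.sin (t * τ / 2);
         Real.sin (t * τ / 2), Real.cos (t * τ / 2)]) :
    ∀ t : ℝ,
      (g t).det = 1 ∧
      ((g t)⁻¹ * Matrix.of fun i j => deriv (fun s => g s i j) t).IsSymm ∧
      Matrix.trace ((g t)⁻¹ * Matrix.of fun i j => deriv (fun s => g s i j) t) = 0 ∧
      (((g t 0 0 : ℝ) : ℂ) * Complex.I + ((g t 0 1 : ℝ) : ℂ)) /
          (((g t 1 0 : ℝ) : ℂ) * Complex.I + ((g t 1 1 : ℝ) : ℂ))
        = Real.exp t * ((τ : ℂ) + Complex.I) ∧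
      (((g t 1 0 : ℝ) : ℂ) * Complex.I + ((g t 1 1 : ℝ) : ℂ)) ^ (-2 : ℤ)
        = Complex.exp ((t : ℂ) * (1 - Complex.I * τ)) := by
  obtain rfl : g = fun s => shearDilation τ s * rotationMatrix (s * (τ / 2)) := by
    funext s
    rw [hg s, ← mul_div_assoc]
    rfl
  intro t
  have hS : (!![1 / 2, τ / 2; τ / 2, -1 / 2] : Matrix (Fin 2) (Fin 2) ℝ).IsSymm := by
    ext i j
    fin_cases i <;> fin_cases j <;> rfl
  refine ⟨by rw [det_mul, det_shearDilation, det_rotationMatrix, one_mul], ?_, ?_,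
    moebius_apply_I .., ?_⟩
  · rw [inv_mul_entrywiseDeriv]
    exact hS.transpose_mul_mul _
  · rw [inv_mul_entrywiseDeriv,
      trace_transpose_mul_mul_of_orthogonal (transpose_rotationMatrix_mul_self _), trace_fin_two_of]
    ring
  · rw [denominator_at_I_zpow_neg_two]
    congr 1
    push_cast
    ring
end

section
/- Let μ > 0, a ≠ 0, and b be real numbers, and define g : ℝ → Matrix(2,2,ℝ) by g(t) = [[cos(at), sin(at)],[−sin(at), cos(at)]] · [[e^{−μ/2}, 0],[0, e^{μ/2}]] · [[cos(bt/2), −sin(bt/2)],[sin(bt/2), cos(bt/2)]]. Then g(t)⁻¹ · g'(t) is a symmetric matrix for all t ∈ ℝ if and only if b = 2a·cosh μ; and in that case g(t)⁻¹·g'(t) also has trace 0 for all t. -/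
/-!
Write `g t = R (a t) * H * R (-b t / 2)` with the rotations `R θ` and `H = diag (e^{-μ/2}, e^{μ/2})`.
Since `R' = R * J` for `J = R (π / 2)`, which commutes with every rotation, the left logarithmic
derivative is `g⁻¹ g' = R (b t / 2) * X * R (-b t / 2)` for the constant matrix
`X = a H⁻¹ J H - (b / 2) J = [[0, a e^μ - b/2], [b/2 - a e^{-μ}, 0]]`.
Conjugating by a rotation preserves symmetry and trace, so `g⁻¹ g'` is symmetric exactly when `X` is,
i.e. when `b = a (e^μ + e^{-μ})`, and it is always traceless.
-/

open Matrix Real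

-- The product rule needs a normed algebra structure; any norm on matrices gives the same derivatives.
attribute [local instance] Matrix.linftyOpNormedAddCommGroup Matrix.linftyOpNormedSpace
  Matrix.linftyOpNormedRing Matrix.linftyOpNormedAlgebra

theorem of_deriv_apply_eq_of_hasDerivAt {m n : Type*} [Fintype m] [Fintype n]
    {f : ℝ → Matrix m n ℝ} {f' : Matrix m n ℝ} {t : ℝ} (hf : HasDerivAt f f' t) :
    Matrix.of (fun i j => deriv (fun s => f s i j) t) = f' := by
  ext i j
  exact ((LinearMap.toContinuousLinearMap (entryLinearMap ℝ ℝ i j)).hasFDerivAt.comp_hasDerivAt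
    t hf).deriv

theorem Matrix.isSymm_mul_mul_transpose_iff {n R : Type*} [Fintype n] [DecidableEq n] [CommSemiring R]
    {U : Matrix n n R} (hU : Uᵀ * U = 1) (X : Matrix n n R) :
    (U * X * Uᵀ).IsSymm ↔ X.IsSymm := by
  refine ⟨fun h => ?_, fun h => ?_⟩
  · have := congrArg (fun M => Uᵀ * M * U) h.eq
    show Xᵀ = X
    simpa only [transpose_mul, transpose_transpose, Matrix.mul_assoc, hU, Matrix.mul_one,
      ← Matrix.mul_assoc Uᵀ U, Matrix.one_mul] using this
  · simp only [IsSymm, transpose_mul, transpose_transpose, h.eq, Matrix.mul_assoc]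

noncomputable section

namespace SL2R

def rot (θ : ℝ) : Matrix (Fin 2) (Fin 2) ℝ := !![cos θ, sin θ; -sin θ, cos θ]

def hyp (μ : ℝ) : Matrix (Fin 2) (Fin 2) ℝ := !![exp (-μ / 2), 0; 0, exp (μ / 2)]

theorem rot_add (x y : ℝ) : rot (x + y) = rot x * rot y := by
  ext i j
  fin_cases i <;> fin_cases j <;> simp [rot, cos_add, sin_add] <;> ring

theorem rot_zero : rot 0 = 1 := by
  ext i j
  fin_cases i <;> fin_cases j <;> simp [rot]

theorem rot_neg_mul_rot (θ : ℝ) : rot (-θ) * rot θ = 1 := by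
  rw [← rot_add, neg_add_cancel, rot_zero]

theorem rot_mul_rot_neg (θ : ℝ) : rot θ * rot (-θ) = 1 := by
  rw [← rot_add, add_neg_cancel, rot_zero]

theorem rot_neg_mul_rot_mul (θ : ℝ) (M : Matrix (Fin 2) (Fin 2) ℝ) :
    rot (-θ) * (rot θ * M) = M := by
  rw [← Matrix.mul_assoc, rot_neg_mul_rot, Matrix.one_mul]

theorem rot_mul_comm (x y : ℝ) : rot x * rot y = rot y * rot x := by
  rw [← rot_add, ← rot_add, add_comm]

theorem transpose_rot (θ : ℝ) : (rot θ)ᵀ = rot (-θ) := by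
  ext i j
  fin_cases i <;> fin_cases j <;> simp [rot]

theorem inv_rot (θ : ℝ) : (rot θ)⁻¹ = rot (-θ) :=
  inv_eq_left_inv (rot_neg_mul_rot θ)

theorem rot_neg_eq (θ : ℝ) : !![cos θ, -sin θ; sin θ, cos θ] = rot (-θ) := by
  ext i j
  fin_cases i <;> fin_cases j <;> simp [rot]

theorem rot_eq_cos_smul_add_sin_smul (θ : ℝ) : rot θ = cos θ • 1 + sin θ • rot (π / 2) := by
  ext i j
  fin_cases i <;> fin_cases j <;> simp [rot]

theorem hasDerivAt_rot (θ : ℝ) : HasDerivAt rot (rot θ * rot (π / 2)) θ := by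
  have h := ((hasDerivAt_cos θ).smul_const (1 : Matrix (Fin 2) (Fin 2) ℝ)).add
    ((hasDerivAt_sin θ).smul_const (rot (π / 2)))
  rw [← rot_add, rot_eq_cos_smul_add_sin_smul, cos_add_pi_div_two, sin_add_pi_div_two]
  exact h.congr_of_eventuallyEq (.of_forall rot_eq_cos_smul_add_sin_smul)

theorem hasDerivAt_rot_const_mul (c t : ℝ) :
    HasDerivAt (fun s => rot (c * s)) (c • (rot (c * t) * rot (π / 2))) t := by
  have h := (hasDerivAt_rot (c * t)).scomp t ((hasDerivAt_id t).const_mul c)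
  rw [mul_one] at h
  exact h

theorem hyp_neg_mul_hyp (μ : ℝ) : hyp (-μ) * hyp μ = 1 := by
  ext i j
  fin_cases i <;> fin_cases j <;> simp [hyp, ← exp_add] <;> ring

theorem hyp_neg_mul_hyp_mul (μ : ℝ) (M : Matrix (Fin 2) (Fin 2) ℝ) :
    hyp (-μ) * (hyp μ * M) = M := by
  rw [← Matrix.mul_assoc, hyp_neg_mul_hyp, Matrix.one_mul]

theorem inv_hyp (μ : ℝ) : (hyp μ)⁻¹ = hyp (-μ) :=
  inv_eq_left_inv (hyp_neg_mul_hyp μ)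

-- The matrix `X` of the introduction, with `c = -b / 2`.
def generator (μ a c : ℝ) : Matrix (Fin 2) (Fin 2) ℝ :=
  a • (hyp (-μ) * rot (π / 2) * hyp μ) + c • rot (π / 2)

theorem generator_eq (μ a c : ℝ) :
    generator μ a c = !![0, a * exp μ + c; -(a * exp (-μ)) - c, 0] := by
  ext i j
  fin_cases i <;> fin_cases j <;> simp [generator, hyp, rot, ← exp_add, sub_eq_add_neg]

theorem isSymm_generator_iff (μ a c : ℝ) : (generator μ a c).IsSymm ↔ c = -(a * cosh μ) := by
  rw [generator_eq, IsSymm.ext_iff, Fin.forall_fin_two, Fin.forall_fin_two, Fin.forall_fin_two,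
    cosh_eq]
  simp only [Fin.isValue, of_apply, cons_val', cons_val_zero, cons_val_one, empty_val',
    cons_val_fin_one, true_and, and_true]
  constructor
  · rintro ⟨h, -⟩
    linarith
  · intro h
    constructor <;> linarith

theorem trace_generator (μ a c : ℝ) : (generator μ a c).trace = 0 := by
  simp [generator_eq, trace_fin_two]

theorem isSymm_rot_neg_mul_mul_rot_iff (θ : ℝ) (X : Matrix (Fin 2) (Fin 2) ℝ) :
    (rot (-θ) * X * rot θ).IsSymm ↔ X.IsSymm := by
  simpa only [transpose_rot, neg_neg] using
    isSymm_mul_mul_transpose_iff (U := rot (-θ)) (by rw [transpose_rot, neg_neg, rot_mul_rot_neg]) X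

theorem trace_rot_neg_mul_mul_rot (θ : ℝ) (X : Matrix (Fin 2) (Fin 2) ℝ) :
    (rot (-θ) * X * rot θ).trace = X.trace := by
  rw [trace_mul_cycle, rot_mul_rot_neg, Matrix.one_mul]

theorem hasDerivAt_rot_mul_hyp_mul_rot (μ a c t : ℝ) :
    HasDerivAt (fun s => rot (a * s) * hyp μ * rot (c * s))
      (a • (rot (a * t) * rot (π / 2)) * hyp μ * rot (c * t) +
        rot (a * t) * hyp μ * (c • (rot (c * t) * rot (π / 2)))) t :=
  ((hasDerivAt_rot_const_mul a t).mul_const (hyp μ)).mul (hasDerivAt_rot_const_mul c t)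

theorem inv_mul_deriv_eq (μ a c t : ℝ) :
    (rot (a * t) * hyp μ * rot (c * t))⁻¹ *
      (a • (rot (a * t) * rot (π / 2)) * hyp μ * rot (c * t) +
        rot (a * t) * hyp μ * (c • (rot (c * t) * rot (π / 2)))) =
      rot (-(c * t)) * generator μ a c * rot (c * t) := by
  simp only [Matrix.mul_inv_rev, inv_rot, inv_hyp, generator, Matrix.mul_add, Matrix.add_mul,
    Matrix.mul_smul, Matrix.smul_mul, Matrix.mul_assoc]
  simp only [rot_neg_mul_rot_mul, hyp_neg_mul_hyp_mul, rot_mul_comm (c * t)]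

end SL2R

end

open SL2R in
theorem stmt16_general (μ a b : ℝ)
    (g : ℝ → Matrix (Fin 2) (Fin 2) ℝ)
    (hg : ∀ t : ℝ, g t =
      !![Real.cos (a * t), Real.sin (a * t); -Real.sin (a * t), Real.cos (a * t)] *
      !![Real.exp (-μ / 2), 0; 0, Real.exp (μ / 2)] *
      !![Real.cos (b * t / 2), -Real.sin (b * t / 2);
         Real.sin (b * t / 2), Real.cos (b * t / 2)]) :
    ((∀ t : ℝ, ((g t)⁻¹ * Matrix.of fun i j => deriv (fun s => g s i j) t).IsSymm)
        ↔ b = 2 * a * Real.cosh μ) ∧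
    (b = 2 * a * Real.cosh μ →
      ∀ t : ℝ, Matrix.trace ((g t)⁻¹ * Matrix.of fun i j => deriv (fun s => g s i j) t) = 0) := by
  have hg' : g = fun s => rot (a * s) * hyp μ * rot (-b / 2 * s) := by
    funext s
    rw [hg, rot_neg_eq, show -(b * s / 2) = -b / 2 * s by ring]
    rfl
  have hlog : ∀ t, (g t)⁻¹ * Matrix.of (fun i j => deriv (fun s => g s i j) t) =
      rot (-(-b / 2 * t)) * generator μ a (-b / 2) * rot (-b / 2 * t) := by
    intro t
    rw [of_deriv_apply_eq_of_hasDerivAt (hg' ▸ hasDerivAt_rot_mul_hyp_mul_rot μ a (-b / 2) t), hg',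
      inv_mul_deriv_eq]
  simp only [hlog, isSymm_rot_neg_mul_mul_rot_iff, isSymm_generator_iff, trace_rot_neg_mul_mul_rot,
    trace_generator, forall_const, implies_true, and_true]
  constructor <;> intro h <;> linarith

/-- the curve
`g(t) = [[cos at, sin at],[−sin at, cos at]]·[[e^{−μ/2},0],[0,e^{μ/2}]]·[[cos bt/2, −sin bt/2],[sin bt/2, cos bt/2]]`
over the hyperbolic circle of radius `μ` has `g(t)⁻¹g'(t)` symmetric for all `t`
iff `b = 2a cosh μ`, in which case `g(t)⁻¹g'(t)` is also traceless. -/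
theorem stmt16 (μ a b : ℝ) (hμ : 0 < μ) (ha : a ≠ 0)
    (g : ℝ → Matrix (Fin 2) (Fin 2) ℝ)
    (hg : ∀ t : ℝ, g t =
      !![Real.cos (a * t), Real.sin (a * t); -Real.sin (a * t), Real.cos (a * t)] *
      !![Real.exp (-μ / 2), 0; 0, Real.exp (μ / 2)] *
      !![Real.cos (b * t / 2), -Real.sin (b * t / 2);
         Real.sin (b * t / 2), Real.cos (b * t / 2)]) :
    ((∀ t : ℝ, ((g t)⁻¹ * Matrix.of fun i j => deriv (fun s => g s i j) t).IsSymm)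
        ↔ b = 2 * a * Real.cosh μ) ∧
    (b = 2 * a * Real.cosh μ →
      ∀ t : ℝ, Matrix.trace ((g t)⁻¹ * Matrix.of fun i j => deriv (fun s => g s i j) t) = 0) :=
  stmt16_general μ a b g hg
end

section
/- Let Γ be a group, γ₀ ∈ Γ an element of infinite order, and Γ₀ = ⟨γ₀⟩ the cyclic subgroup it generates. Let T > 0 and let F : Γ × ℝ → ℂ be a function, measurable in the second variable, satisfying F(g·γ₀ⁿ, t) = F(g, t + nT) for all g ∈ Γ, n ∈ ℤ, t ∈ ℝ, and such that ∑_{g ∈ Γ} ∫_0^T |F(g,t)| dt < ∞. Then for each g ∈ Γ the integral ∫_{−∞}^{∞} F(g,t) dt converges and depends only on the left coset g·Γ₀, and ∑_{g ∈ Γ} ∫_0^T F(g,t) dt = ∑_{gΓ₀ ∈ Γ/Γ₀} ∫_{−∞}^{∞} F(g,t) dt, where the right-hand sum over cosets is absolutely convergent. -/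
/-!
The intervals `(nT, (n+1)T]`, `n ∈ ℤ`, tile `ℝ`, and the equivariance `F(g, t + nT) = F(gγ₀ⁿ, t)`
turns the integral of `F(g, ·)` over the `n`-th tile into `∫₀ᵀ F(gγ₀ⁿ, t) dt`. As `γ₀` has infinite
order, `(c, n) ↦ c.out * γ₀ⁿ` is a bijection `Γ/Γ₀ × ℤ ≃ Γ`, so the absolutely convergent sum over
`Γ` regroups along cosets into `∑_c ∑_n ∫₀ᵀ F(c.out * γ₀ⁿ, t) dt = ∑_c ∫_ℝ F(c.out, t) dt`.
-/

open MeasureTheory Set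

section Translates

variable {E : Type*} [NormedAddCommGroup E]

theorem preimage_add_zsmul_Ioc_zsmul (T : ℝ) (n : ℤ) :
    (· + n • T) ⁻¹' Ioc (n • T) ((n + 1) • T) = Ioc 0 T := by
  rw [preimage_add_const_Ioc, add_zsmul, one_zsmul, sub_self, add_sub_cancel_left]

theorem integrableOn_Ioc_zsmul_iff (φ : ℝ → E) (T : ℝ) (n : ℤ) :
    IntegrableOn φ (Ioc (n • T) ((n + 1) • T)) ↔
      IntegrableOn (fun t => φ (t + n • T)) (Ioc 0 T) := by
  rw [← (measurePreserving_add_right volume (n • T)).integrableOn_comp_preimage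
    (measurableEmbedding_addRight _), preimage_add_zsmul_Ioc_zsmul]
  rfl

theorem setIntegral_Ioc_zsmul [NormedSpace ℝ E] (φ : ℝ → E) (T : ℝ) (n : ℤ) :
    ∫ t in Ioc (n • T) ((n + 1) • T), φ t = ∫ t in Ioc 0 T, φ (t + n • T) := by
  rw [← (measurePreserving_add_right volume (n • T)).setIntegral_preimage_emb
    (measurableEmbedding_addRight _), preimage_add_zsmul_Ioc_zsmul]

theorem integrable_of_summable_integral_norm_Ioc_translates {T : ℝ} (hT : 0 < T) {φ : ℝ → E}
    (hφ : ∀ n : ℤ, IntegrableOn (fun t => φ (t + n • T)) (Ioc 0 T))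
    (hsum : Summable fun n : ℤ => ∫ t in Ioc 0 T, ‖φ (t + n • T)‖) : Integrable φ := by
  have := integrableOn_iUnion_of_summable_integral_norm
    (s := fun n : ℤ => Ioc (n • T) ((n + 1) • T))
    (fun n => (integrableOn_Ioc_zsmul_iff φ T n).2 (hφ n))
    (by simpa only [setIntegral_Ioc_zsmul] using hsum)
  rwa [iUnion_Ioc_zsmul hT, integrableOn_univ] at this

theorem hasSum_integral_Ioc_translates [NormedSpace ℝ E] {T : ℝ} (hT : 0 < T) {φ : ℝ → E}
    (hφ : Integrable φ) :
    HasSum (fun n : ℤ => ∫ t in Ioc 0 T, φ (t + n • T)) (∫ t, φ t) := by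
  have := hasSum_integral_iUnion (fun n : ℤ => measurableSet_Ioc)
    (pairwise_disjoint_Ioc_zsmul T) (by rw [iUnion_Ioc_zsmul hT]; exact hφ.integrableOn)
  rwa [iUnion_Ioc_zsmul hT, setIntegral_univ, funext (setIntegral_Ioc_zsmul φ T)] at this

end Translates

section CosetsOfZPowers

variable {Γ : Type*} [Group Γ] {γ₀ : Γ}

theorem bijective_out_mul_zpow (hγ₀ : ¬ IsOfFinOrder γ₀) :
    Function.Bijective fun p : (Γ ⧸ Subgroup.zpowers γ₀) × ℤ => Quotient.out p.1 * γ₀ ^ p.2 := by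
  have hinj := injective_zpow_iff_not_isOfFinOrder.mpr hγ₀
  have hmk (c : Γ ⧸ Subgroup.zpowers γ₀) (n : ℤ) :
      (QuotientGroup.mk (Quotient.out c * γ₀ ^ n) : Γ ⧸ Subgroup.zpowers γ₀) = c := by
    rw [QuotientGroup.mk_mul_of_mem _ (Subgroup.zpow_mem_zpowers γ₀ n)]
    exact QuotientGroup.out_eq' c
  refine ⟨?_, fun g => ?_⟩
  · rintro ⟨c, n⟩ ⟨c', m⟩ h
    obtain rfl : c = c' := by
      simpa only [hmk] using congrArg (QuotientGroup.mk (s := Subgroup.zpowers γ₀)) h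
    exact Prod.ext rfl (hinj (mul_left_cancel h))
  · have hmem : (Quotient.out (g : Γ ⧸ Subgroup.zpowers γ₀))⁻¹ * g ∈ Subgroup.zpowers γ₀ :=
      QuotientGroup.eq.mp (QuotientGroup.out_eq' _)
    obtain ⟨n, hn⟩ := Subgroup.mem_zpowers_iff.mp hmem
    exact ⟨(QuotientGroup.mk g, n), by simp [hn]⟩

variable {E : Type*} [AddCommGroup E] [UniformSpace E] [IsUniformAddGroup E] [CompleteSpace E]
  {f : Γ → E}

theorem Summable.summable_tsum_out_mul_zpow (hγ₀ : ¬ IsOfFinOrder γ₀) (hf : Summable f) :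
    Summable fun c : Γ ⧸ Subgroup.zpowers γ₀ => ∑' n : ℤ, f (Quotient.out c * γ₀ ^ n) :=
  ((Equiv.ofBijective _ (bijective_out_mul_zpow hγ₀)).summable_iff.mpr hf).prod

theorem Summable.tsum_eq_tsum_out_mul_zpow [T0Space E] (hγ₀ : ¬ IsOfFinOrder γ₀)
    (hf : Summable f) :
    ∑' g, f g = ∑' (c : Γ ⧸ Subgroup.zpowers γ₀) (n : ℤ), f (Quotient.out c * γ₀ ^ n) := by
  let e := Equiv.ofBijective _ (bijective_out_mul_zpow hγ₀)
  rw [← e.tsum_eq]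
  exact (e.summable_iff.mpr hf).tsum_prod

end CosetsOfZPowers

theorem stmt19_general (Γ : Type*) [Group Γ] (γ₀ : Γ) (hγ₀ : ¬ IsOfFinOrder γ₀)
    (T : ℝ) (hT : 0 < T) (F : Γ × ℝ → ℂ)
    (hequiv : ∀ (g : Γ) (n : ℤ) (t : ℝ), F (g * γ₀ ^ n, t) = F (g, t + n * T))
    (hint : ∀ g : Γ, IntegrableOn (fun t : ℝ => F (g, t)) (Set.Ioc 0 T))
    (hsum : Summable fun g : Γ => ∫ t in Set.Ioc (0 : ℝ) T, ‖F (g, t)‖) :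
    (∀ g : Γ, Integrable fun t : ℝ => F (g, t)) ∧
    (∀ g : Γ, ∀ γ ∈ Subgroup.zpowers γ₀,
      ∫ t : ℝ, F (g * γ, t) = ∫ t : ℝ, F (g, t)) ∧
    (Summable fun c : Γ ⧸ Subgroup.zpowers γ₀ => ‖∫ t : ℝ, F (Quotient.out c, t)‖) ∧
    ∑' g : Γ, ∫ t in Set.Ioc (0 : ℝ) T, F (g, t)
      = ∑' c : Γ ⧸ Subgroup.zpowers γ₀, ∫ t : ℝ, F (Quotient.out c, t) := by
  have hshift (g : Γ) (n : ℤ) (t : ℝ) : F (g, t + n • T) = F (g * γ₀ ^ n, t) := by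
    rw [hequiv, zsmul_eq_mul]
  have hintegrable (g : Γ) : Integrable fun t => F (g, t) := by
    have hinj := injective_zpow_iff_not_isOfFinOrder.mpr hγ₀
    refine integrable_of_summable_integral_norm_Ioc_translates hT (fun n => ?_) ?_
    · simpa only [hshift] using hint (g * γ₀ ^ n)
    · simpa only [hshift, Function.comp_def] using
        hsum.comp_injective ((mul_right_injective g).comp hinj)
  have hunfold (g : Γ) :
      HasSum (fun n : ℤ => ∫ t in Ioc 0 T, F (g * γ₀ ^ n, t)) (∫ t, F (g, t)) := by
    simpa only [hshift] using hasSum_integral_Ioc_translates hT (hintegrable g)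
  have hunfold_norm (g : Γ) :
      HasSum (fun n : ℤ => ∫ t in Ioc 0 T, ‖F (g * γ₀ ^ n, t)‖) (∫ t, ‖F (g, t)‖) := by
    simpa only [hshift] using hasSum_integral_Ioc_translates hT (hintegrable g).norm
  refine ⟨hintegrable, ?_, ?_, ?_⟩
  · rintro g _ ⟨n, rfl⟩
    simp only [hequiv]
    exact integral_add_right_eq_self (fun t => F (g, t)) _
  · refine (hsum.summable_tsum_out_mul_zpow hγ₀).of_nonneg_of_le (fun _ => norm_nonneg _)
      fun c => ?_
    rw [(hunfold_norm _).tsum_eq]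
    exact norm_integral_le_integral_norm _
  · have hsum_integral : Summable fun g => ∫ t in Ioc 0 T, F (g, t) :=
      hsum.of_norm_bounded fun g => norm_integral_le_integral_norm _
    rw [hsum_integral.tsum_eq_tsum_out_mul_zpow hγ₀]
    exact tsum_congr fun c => (hunfold _).tsum_eq

/-- the Rankin–Selberg unfolding identity.  For `γ₀ ∈ Γ` of infinite
order generating `Γ₀ = ⟨γ₀⟩`, `T > 0`, and `F : Γ × ℝ → ℂ` measurable in the second
variable with `F(gγ₀ⁿ, t) = F(g, t + nT)` and `∑_g ∫₀ᵀ |F(g,t)| dt < ∞`, each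
`∫ℝ F(g,t) dt` converges, depends only on the left coset `gΓ₀`, and
`∑_{g ∈ Γ} ∫₀ᵀ F(g,t) dt = ∑_{gΓ₀ ∈ Γ/Γ₀} ∫ℝ F(g,t) dt`, the coset sum being
absolutely convergent. -/
theorem stmt19 (Γ : Type*) [Group Γ] (γ₀ : Γ) (hγ₀ : ¬ IsOfFinOrder γ₀)
    (T : ℝ) (hT : 0 < T) (F : Γ × ℝ → ℂ)
    (hmeas : ∀ g : Γ, Measurable fun t : ℝ => F (g, t))
    (hequiv : ∀ (g : Γ) (n : ℤ) (t : ℝ), F (g * γ₀ ^ n, t) = F (g, t + n * T))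
    (hint : ∀ g : Γ, IntegrableOn (fun t : ℝ => F (g, t)) (Set.Ioc 0 T))
    (hsum : Summable fun g : Γ => ∫ t in Set.Ioc (0 : ℝ) T, ‖F (g, t)‖) :
    (∀ g : Γ, Integrable fun t : ℝ => F (g, t)) ∧
    (∀ g : Γ, ∀ γ ∈ Subgroup.zpowers γ₀,
      ∫ t : ℝ, F (g * γ, t) = ∫ t : ℝ, F (g, t)) ∧
    (Summable fun c : Γ ⧸ Subgroup.zpowers γ₀ => ‖∫ t : ℝ, F (Quotient.out c, t)‖) ∧
    ∑' g : Γ, ∫ t in Set.Ioc (0 : ℝ) T, F (g, t)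
      = ∑' c : Γ ⧸ Subgroup.zpowers γ₀, ∫ t : ℝ, F (Quotient.out c, t) :=
  stmt19_general Γ γ₀ hγ₀ T hT F hequiv hint hsum
end
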